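/- arXiv:1502.04061 — 7 statements merged into one kernel-verified Lean document; each statement's English description precedes it below -/
import Mathlib

section
/- In the random tournament T_n on n ≥ 2 vertices, the probability that some ordered pair of distinct vertices (u,v) has directed distance from u to v at least 3 (equivalently, the diameter of T_n is at least 3) is at most (n(n−1)/2)·(3/4)^{n−2}. -/
/-! Model of the uniform random tournament on `n` vertices.  A sample point assigns a
Boolean to every ordered pair of vertices; only the Booleans indexed by pairs `(i, j)`
with `i < j` are consulted: the edge between `i` and `j` is oriented `i → j` iff that
Boolean is `true`.  Since distinct unordered pairs consult distinct coordinates, under the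
uniform probability measure the orientations of the edges are independent and each of the
two directions has probability `1/2`. -/

/-- The sample space for the random tournament on `n` vertices. -/
abbrev TOmega (n : ℕ) := Fin n → Fin n → Bool

/-- `tadj ω i j` : in the tournament coded by `ω`, the edge between `i` and `j`
is oriented from `i` to `j`. -/
def tadj {n : ℕ} (ω : TOmega n) (i j : Fin n) : Prop :=
  i ≠ j ∧ (if i < j then ω i j = true else ω j i = false)

/-- Uniform probability of an event. -/
noncomputable def tPr {n : ℕ} (E : Set (TOmega n)) : ℝ :=
  (∑ ω : TOmega n, E.indicator (fun _ => (1 : ℝ)) ω) / (Fintype.card (TOmega n) : ℝ)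

/-- Expectation with respect to the uniform probability measure. -/
noncomputable def tEx {n : ℕ} (f : TOmega n → ℝ) : ℝ :=
  (∑ ω : TOmega n, f ω) / (Fintype.card (TOmega n) : ℝ)

/-- The first out-neighborhood of `v`: vertices at directed distance exactly 1. -/
def tN1 {n : ℕ} (ω : TOmega n) (v : Fin n) : Set (Fin n) := {w | tadj ω v w}

/-- The second out-neighborhood of `v`: vertices at directed distance exactly 2. -/
def tN2 {n : ℕ} (ω : TOmega n) (v : Fin n) : Set (Fin n) :=
  {w | w ≠ v ∧ ¬ tadj ω v w ∧ ∃ x, tadj ω v x ∧ tadj ω x w}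

/-- `v` is a Seymour vertex of the tournament coded by `ω`. -/
def tSeymour {n : ℕ} (ω : TOmega n) (v : Fin n) : Prop :=
  (tN1 ω v).ncard ≤ (tN2 ω v).ncard

/-- The number of Seymour vertices. -/
noncomputable def tS {n : ℕ} (ω : TOmega n) : ℕ := {v | tSeymour ω v}.ncard

/-- The expected number of Seymour vertices of the random tournament on `n` vertices. -/
noncomputable def tES (n : ℕ) : ℝ := tEx (fun ω : TOmega n => (tS ω : ℝ))

/-- The variance of the number of Seymour vertices of the random tournament on `n`
vertices. -/
noncomputable def tVarS (n : ℕ) : ℝ := tEx (fun ω : TOmega n => ((tS ω : ℝ) - tES n) ^ 2)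

/-- `P(Bin(m, 1/2) ≤ x)` for a real threshold `x`:  the probability that a binomial random
variable with `m` trials and success probability `1/2` is at most `x`. -/
noncomputable def binHalfCdf (m : ℕ) (x : ℝ) : ℝ :=
  ∑ k ∈ Finset.range (m + 1), if (k : ℝ) ≤ x then (m.choose k : ℝ) * (1 / 2) ^ m else 0

/-! By the union bound it suffices to show that for fixed `u ≠ v` the event "no path of length
at most 2 from `u` to `v`" has probability `1/2 · (3/4)^(n-2)`.  Reversing a single edge is an
involution of the sample space, so an event that does not look at that edge is split in half by
its orientation.  The edge `uv` must point to `u`, and for each further vertex `x` the path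
`u → x → v` is absent with probability `3/4` given the constraints already imposed, as seen by
halving along `ux` and then along `xv`. -/

open Finset

section
variable {n : ℕ}

instance (ω : TOmega n) : DecidableRel (tadj ω) := fun i j => by unfold tadj; infer_instance

lemma tPr_eq_card_div (E : Set (TOmega n)) [DecidablePred (· ∈ E)] :
    tPr E = #{ω | ω ∈ E} / Fintype.card (TOmega n) := by
  simp only [tPr, Set.indicator_apply, sum_boole]

lemma tPr_mono {E E' : Set (TOmega n)} (h : E ⊆ E') : tPr E ≤ tPr E' := by
  classical
  rw [tPr_eq_card_div, tPr_eq_card_div]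
  gcongr

lemma tPr_biUnion_le {ι : Type*} (s : Finset ι) (E : ι → Set (TOmega n)) :
    tPr (⋃ i ∈ s, E i) ≤ ∑ i ∈ s, tPr (E i) := by
  classical
  simp only [tPr_eq_card_div, ← sum_div]
  gcongr
  calc (#{ω | ω ∈ ⋃ i ∈ s, E i} : ℝ) = #(s.biUnion fun i => {ω | ω ∈ E i}) := by
        congr 2; ext ω; simp
    _ ≤ ∑ i ∈ s, (#{ω | ω ∈ E i} : ℝ) := by exact_mod_cast card_biUnion_le

def flipEdge (e : Sym2 (Fin n)) (ω : TOmega n) : TOmega n :=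
  fun i j => if s(i, j) = e then !ω i j else ω i j

lemma flipEdge_involutive (e : Sym2 (Fin n)) : Function.Involutive (flipEdge e) := by
  intro ω; funext i j; by_cases h : s(i, j) = e <;> simp [flipEdge, h]

lemma tadj_flipEdge_of_ne {e : Sym2 (Fin n)} {i j : Fin n} (h : s(i, j) ≠ e) (ω : TOmega n) :
    tadj (flipEdge e ω) i j ↔ tadj ω i j := by
  have h' : s(j, i) ≠ e := Sym2.eq_swap ▸ h
  simp [tadj, flipEdge, h, h']

lemma tadj_flipEdge_self {i j : Fin n} (h : i ≠ j) (ω : TOmega n) :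
    tadj (flipEdge s(i, j) ω) i j ↔ ¬ tadj ω i j := by
  rcases h.lt_or_gt with hij | hij
  · simp [tadj, flipEdge, hij, h]
  · simp [tadj, flipEdge, hij.not_gt, h, Sym2.eq_swap]

section Halving
variable {s : Finset (TOmega n)} {a b : Fin n}

lemma card_filter_tadj_eq_card_filter_not_tadj (hab : a ≠ b)
    (hs : ∀ ω, flipEdge s(a, b) ω ∈ s ↔ ω ∈ s) :
    #{ω ∈ s | tadj ω a b} = #{ω ∈ s | ¬ tadj ω a b} :=
  card_nbij' (flipEdge s(a, b)) (flipEdge s(a, b))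
    (fun ω => by simp [hs, tadj_flipEdge_self hab])
    (fun ω => by simp [hs, tadj_flipEdge_self hab])
    (fun ω _ => flipEdge_involutive _ ω) (fun ω _ => flipEdge_involutive _ ω)

lemma two_mul_card_filter_tadj (hab : a ≠ b) (hs : ∀ ω, flipEdge s(a, b) ω ∈ s ↔ ω ∈ s) :
    2 * #{ω ∈ s | tadj ω a b} = #s := by
  have := card_filter_add_card_filter_not (s := s) (fun ω => tadj ω a b)
  have := card_filter_tadj_eq_card_filter_not_tadj hab hs
  omega

lemma two_mul_card_filter_not_tadj (hab : a ≠ b) (hs : ∀ ω, flipEdge s(a, b) ω ∈ s ↔ ω ∈ s) :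
    2 * #{ω ∈ s | ¬ tadj ω a b} = #s := by
  have := card_filter_add_card_filter_not (s := s) (fun ω => tadj ω a b)
  have := card_filter_tadj_eq_card_filter_not_tadj hab hs
  omega

end Halving

def NoShortPath (ω : TOmega n) (u v : Fin n) (F : Finset (Fin n)) : Prop :=
  ¬ tadj ω u v ∧ ∀ y ∈ F, ¬ (tadj ω u y ∧ tadj ω y v)

instance (u v : Fin n) (F : Finset (Fin n)) : DecidablePred (NoShortPath · u v F) :=
  fun ω => by unfold NoShortPath; infer_instance

variable {u v x : Fin n} {F : Finset (Fin n)}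

lemma noShortPath_flipEdge_iff {e : Sym2 (Fin n)} (huv : s(u, v) ≠ e)
    (hF : ∀ y ∈ F, s(u, y) ≠ e ∧ s(y, v) ≠ e) (ω : TOmega n) :
    NoShortPath (flipEdge e ω) u v F ↔ NoShortPath ω u v F := by
  unfold NoShortPath
  rw [tadj_flipEdge_of_ne huv]
  refine and_congr_right' (forall₂_congr fun y hy => ?_)
  rw [tadj_flipEdge_of_ne (hF y hy).1, tadj_flipEdge_of_ne (hF y hy).2]

lemma noShortPath_insert_iff (ω : TOmega n) :
    NoShortPath ω u v (insert x F) ↔ NoShortPath ω u v F ∧ ¬ (tadj ω u x ∧ tadj ω x v) := by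
  simp only [NoShortPath, forall_mem_insert]
  tauto

lemma two_mul_card_noShortPath_empty (huv : u ≠ v) :
    2 * #{ω | NoShortPath ω u v ∅} = Fintype.card (TOmega n) := by
  simpa [NoShortPath] using two_mul_card_filter_not_tadj (s := univ) huv (by simp)

lemma noShortPath_flipEdge_iff_of_notMem (hxu : x ≠ u) (hxv : x ≠ v) (hxF : x ∉ F) (w : Fin n)
    (ω : TOmega n) : NoShortPath (flipEdge s(x, w) ω) u v F ↔ NoShortPath ω u v F := by
  refine noShortPath_flipEdge_iff ?_ (fun y hy => ⟨?_, ?_⟩) ω <;>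
    · intro h
      have hx := h ▸ Sym2.mem_mk_left x w
      simp only [Sym2.mem_iff] at hx
      grind

lemma four_mul_card_noShortPath_insert (huv : u ≠ v) (hxu : x ≠ u) (hxv : x ≠ v) (hxF : x ∉ F) :
    4 * #{ω | NoShortPath ω u v (insert x F)} = 3 * #{ω | NoShortPath ω u v F} := by
  set s : Finset (TOmega n) := {ω | NoShortPath ω u v F}
  have hinsert : ({ω | NoShortPath ω u v (insert x F)} : Finset (TOmega n)) =
      {ω ∈ s | ¬ (tadj ω u x ∧ tadj ω x v)} := by
    ext ω
    simp [s, noShortPath_insert_iff]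
  have hsplit := card_filter_add_card_filter_not (s := s) fun ω => tadj ω u x ∧ tadj ω x v
  rw [← hinsert] at hsplit
  have hux_half : 2 * #{ω ∈ s | tadj ω u x} = #s :=
    two_mul_card_filter_tadj hxu.symm fun ω => by
      simpa [s, Sym2.eq_swap] using noShortPath_flipEdge_iff_of_notMem hxu hxv hxF u ω
  have hxv_half : 2 * #{ω ∈ {ω ∈ s | tadj ω u x} | tadj ω x v} = #{ω ∈ s | tadj ω u x} :=
    two_mul_card_filter_tadj hxv fun ω => by
      have hux := tadj_flipEdge_of_ne (i := u) (j := x) (e := s(x, v)) (by simp [huv, hxu.symm]) ω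
      simp [s, hux, noShortPath_flipEdge_iff_of_notMem hxu hxv hxF]
  rw [filter_filter] at hxv_half
  omega

lemma tPr_noShortPath (huv : u ≠ v) (hu : u ∉ F) (hv : v ∉ F) :
    tPr {ω | NoShortPath ω u v F} = 1 / 2 * (3 / 4) ^ #F := by
  induction F using Finset.induction_on with
  | empty =>
    have h : (2 : ℝ) * #{ω | NoShortPath ω u v ∅} = Fintype.card (TOmega n) := by
      exact_mod_cast two_mul_card_noShortPath_empty huv
    rw [tPr_eq_card_div]
    simp only [Set.mem_ofPred_eq, card_empty, pow_zero, mul_one]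
    field_simp
    linarith
  | insert x F hxF ih =>
    have hx : x ≠ u ∧ x ≠ v := by
      constructor <;> rintro rfl <;> simp_all
    have h := four_mul_card_noShortPath_insert huv hx.1 hx.2 hxF
    have h' : (4 : ℝ) * #{ω | NoShortPath ω u v (insert x F)} = 3 * #{ω | NoShortPath ω u v F} := by
      exact_mod_cast h
    rw [tPr_eq_card_div] at ih ⊢
    simp only [Set.mem_ofPred_eq] at ih ⊢
    rw [card_insert_of_notMem hxF, pow_succ, ← mul_assoc, ← ih (by simp_all) (by simp_all)]
    field_simp
    linarith

end

theorem prob_diameter_ge_three_le_general (n : ℕ) :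
    tPr {ω : TOmega n | ∃ u v : Fin n, u ≠ v ∧
        ¬ tadj ω u v ∧ ∀ x, ¬ (tadj ω u x ∧ tadj ω x v)} ≤
      ((n : ℝ) * ((n : ℝ) - 1) / 2) * (3 / 4 : ℝ) ^ (n - 2) := by
  have hcover : {ω : TOmega n | ∃ u v : Fin n, u ≠ v ∧
        ¬ tadj ω u v ∧ ∀ x, ¬ (tadj ω u x ∧ tadj ω x v)} ⊆
      ⋃ p ∈ (univ : Finset (Fin n)).offDiag, {ω | NoShortPath ω p.1 p.2 (univ \ {p.1, p.2})} := by
    rintro ω ⟨u, v, huv, hnot, hpath⟩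
    simp only [Set.mem_iUnion, Set.mem_ofPred_eq]
    exact ⟨(u, v), by simpa using huv, hnot, fun y _ => hpath y⟩
  calc _ ≤ _ := tPr_mono hcover
    _ ≤ _ := tPr_biUnion_le _ _
    _ = ∑ p ∈ (univ : Finset (Fin n)).offDiag, 1 / 2 * (3 / 4 : ℝ) ^ (n - 2) := by
      refine sum_congr rfl fun p hp => ?_
      have hne : p.1 ≠ p.2 := (mem_offDiag.mp hp).2.2
      rw [tPr_noShortPath hne (by simp) (by simp), card_univ_sdiff, card_pair hne, Fintype.card_fin]
    _ = _ := by
      rw [sum_const, offDiag_card, card_univ, Fintype.card_fin, nsmul_eq_mul,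
        Nat.cast_sub (Nat.le_mul_self n)]
      push_cast
      ring

/-- In the random tournament on `n ≥ 2` vertices, the probability that some ordered pair of
distinct vertices `(u, v)` has directed distance from `u` to `v` at least 3 (equivalently,
the diameter is at least 3) is at most `(n(n-1)/2) * (3/4) ^ (n-2)`. -/
theorem prob_diameter_ge_three_le (n : ℕ) (hn : 2 ≤ n) :
    tPr {ω : TOmega n | ∃ u v : Fin n, u ≠ v ∧
        ¬ tadj ω u v ∧ ∀ x, ¬ (tadj ω u x ∧ tadj ω x v)} ≤
      ((n : ℝ) * ((n : ℝ) - 1) / 2) * (3 / 4 : ℝ) ^ (n - 2) :=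
  prob_diameter_ge_three_le_general n
end

section
/- Let S_n be the number of Seymour vertices of the random tournament T_n on n ≥ 2 vertices. Then E(S_n) ≤ n·P(Bin(n−1, 1/2) ≤ (n−1)/2) + (n(n−1)/2)·(3/4)^{n−2}, where Bin(n−1,1/2) denotes a binomial random variable with n−1 trials and success probability 1/2. -/
/-! A Seymour vertex `v` has `|N₁(v)| ≤ (n - 1) / 2`, because `N₁(v)` and `N₂(v)` are disjoint
sets of vertices other than `v`. The out-degree of a fixed vertex is `Bin(n - 1, 1/2)`, so by
linearity of expectation `E(S_n) ≤ n · P(Bin(n - 1, 1/2) ≤ (n - 1)/2)`; the second term of the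
bound is nonnegative. -/
open Finset

theorem sum_comp_fst_div_card {Ω A B : Type*} [Fintype Ω] [Fintype A] [Fintype B] [Nonempty B]
    (e : Ω ≃ A × B) (F : A → ℝ) :
    (∑ ω, F (e ω).1) / Fintype.card Ω = (∑ a, F a) / Fintype.card A := by
  rw [← e.symm.sum_comp, Fintype.sum_prod_type, Fintype.card_congr e, Fintype.card_prod]
  simp only [Equiv.apply_symm_apply, sum_const, card_univ, nsmul_eq_mul, Nat.cast_mul, ← mul_sum]
  rw [mul_comm (Fintype.card A : ℝ), mul_div_mul_left _ _ (by positivity)]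

def finsetEquivBoolFun (α : Type*) [Fintype α] [DecidableEq α] : Finset α ≃ (α → Bool) where
  toFun s a := decide (a ∈ s)
  invFun g := {a | g a}
  left_inv s := by ext; simp
  right_inv g := by ext; simp

theorem sum_boolFun_card_filter (α : Type*) [Fintype α] [DecidableEq α] (F : ℕ → ℝ) :
    ∑ g : α → Bool, F #{a | g a} =
      ∑ k ∈ range (Fintype.card α + 1), ((Fintype.card α).choose k : ℝ) * F k := by
  rw [← (finsetEquivBoolFun α).sum_comp, ← powerset_univ, ← card_univ]
  simp only [← nsmul_eq_mul, ← sum_powerset_apply_card]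
  refine sum_congr rfl fun s _ => ?_
  simp [finsetEquivBoolFun]

section Expectation

variable {n : ℕ}

theorem tEx_mono {f g : TOmega n → ℝ} (h : ∀ ω, f ω ≤ g ω) : tEx f ≤ tEx g :=
  div_le_div_of_nonneg_right (sum_le_sum fun ω _ => h ω) (Nat.cast_nonneg _)

theorem tEx_sum {ι : Type*} (s : Finset ι) (f : ι → TOmega n → ℝ) :
    tEx (fun ω => ∑ i ∈ s, f i ω) = ∑ i ∈ s, tEx (f i) := by
  simp only [tEx, ← sum_div]
  rw [sum_comm]

theorem tEx_indicator_one (E : Set (TOmega n)) : tEx (E.indicator fun _ => 1) = tPr E := rfl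

end Expectation

section Tournament

variable {n : ℕ}

instance (ω : TOmega n) (v w : Fin n) : Decidable (tadj ω v w) := by
  unfold tadj; infer_instance

def IsIncidentCoord (v : Fin n) (p : Fin n × Fin n) : Prop :=
  (p.1 = v ∧ v < p.2) ∨ (p.2 = v ∧ p.1 < v)

instance (v : Fin n) : DecidablePred (IsIncidentCoord v) := fun _ => by
  unfold IsIncidentCoord; infer_instance

def incidentCoord (v : Fin n) (w : {w : Fin n // w ≠ v}) : {p // IsIncidentCoord v p} :=
  if h : v < w.1 then ⟨(v, w.1), Or.inl ⟨rfl, h⟩⟩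
  else ⟨(w.1, v), Or.inr ⟨rfl, lt_of_le_of_ne (not_lt.1 h) w.2⟩⟩

theorem incidentCoord_bijective (v : Fin n) : Function.Bijective (incidentCoord v) := by
  constructor
  · rintro ⟨a, ha⟩ ⟨b, hb⟩ h
    simp only [incidentCoord] at h
    split_ifs at h <;> simp_all [Subtype.ext_iff, Prod.ext_iff]
  · rintro ⟨⟨a, b⟩, ⟨rfl, h⟩ | ⟨rfl, h⟩⟩
    · exact ⟨⟨b, h.ne'⟩, by simp [incidentCoord, h]⟩
    · exact ⟨⟨a, h.ne⟩, by simp [incidentCoord, h.not_gt]⟩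

/-- Up to negating those with `w < v`, the orientations of the edges at `v` (read as `true` iff
`v → w`) are coordinates of `ω`, disjoint from all the others. -/
noncomputable def outEquiv (v : Fin n) :
    TOmega n ≃ ({w : Fin n // w ≠ v} → Bool) × ({p // ¬ IsIncidentCoord v p} → Bool) :=
  (Equiv.curry _ _ _).symm.trans <|
    (Equiv.piEquivPiSubtypeProd (IsIncidentCoord v) _).trans <|
      Equiv.prodCongr
        ((Equiv.arrowCongr (Equiv.ofBijective _ (incidentCoord_bijective v)).symm
          (Equiv.refl Bool)).trans
          (Equiv.piCongrRight fun w => if v < w.1 then Equiv.refl Bool else Equiv.boolNot))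
        (Equiv.refl _)

theorem outEquiv_fst_apply (v : Fin n) (ω : TOmega n) (w : {w : Fin n // w ≠ v}) :
    (outEquiv v ω).1 w = decide (tadj ω v w) := by
  have hne : v ≠ w.1 := fun h => w.2 h.symm
  by_cases h : v < w.1 <;>
    simp [outEquiv, Equiv.piEquivPiSubtypeProd, incidentCoord, Equiv.boolNot, tadj, h, hne]

theorem ncard_tN1_eq_card_filter (ω : TOmega n) (v : Fin n) :
    (tN1 ω v).ncard = #{w : {w : Fin n // w ≠ v} | (outEquiv v ω).1 w} := by
  have himage : Subtype.val '' {w : {w : Fin n // w ≠ v} | tadj ω v w} = tN1 ω v := by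
    ext w
    simp only [Set.mem_image, Set.mem_ofPred_eq, Subtype.exists, exists_and_right,
      exists_eq_right, tN1]
    exact ⟨fun ⟨_, h⟩ => h, fun h => ⟨fun hw => h.1 hw.symm, h⟩⟩
  rw [← himage, Set.ncard_image_of_injective _ Subtype.val_injective,
    Set.ncard_eq_toFinset_card']
  simp [outEquiv_fst_apply]

theorem tPr_ncard_tN1_le (v : Fin n) (x : ℝ) :
    tPr {ω : TOmega n | ((tN1 ω v).ncard : ℝ) ≤ x} = binHalfCdf (n - 1) x := by
  let G : ℕ → ℝ := fun k => if (k : ℝ) ≤ x then 1 else 0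
  have hF : ∀ ω, {ω : TOmega n | ((tN1 ω v).ncard : ℝ) ≤ x}.indicator (fun _ => 1) ω =
      G #{w | (outEquiv v ω).1 w} := fun ω => by
    simp only [Set.indicator_apply, Set.mem_ofPred_eq, ncard_tN1_eq_card_filter, G]
  have hcard : Fintype.card ({w : Fin n // w ≠ v} → Bool) = 2 ^ (n - 1) := by
    simp [Fintype.card_subtype_compl]
  rw [tPr, Fintype.sum_congr _ _ hF,
    sum_comp_fst_div_card (outEquiv v) (fun g => G #{w | g w}), hcard,
    sum_boolFun_card_filter, binHalfCdf, sum_div]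
  simp only [Fintype.card_subtype_compl, Fintype.card_fin, Fintype.card_unique, G]
  refine sum_congr rfl fun k _ => ?_
  split_ifs <;> simp [div_eq_mul_inv]

theorem ncard_tN1_add_ncard_tN2_lt (ω : TOmega n) (v : Fin n) :
    (tN1 ω v).ncard + (tN2 ω v).ncard < n := by
  have hdisj : Disjoint (tN1 ω v) (tN2 ω v) :=
    Set.disjoint_left.2 fun _ h1 h2 => h2.2.1 h1
  have hv : v ∉ tN1 ω v ∪ tN2 ω v := by
    rintro (h | h)
    exacts [h.1 rfl, h.1 rfl]
  calc (tN1 ω v).ncard + (tN2 ω v).ncard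
      < (insert v (tN1 ω v ∪ tN2 ω v)).ncard := by
        rw [Set.ncard_insert_of_notMem hv, Set.ncard_union_eq hdisj]; omega
    _ ≤ n := by simpa using Set.ncard_le_card (insert v (tN1 ω v ∪ tN2 ω v))

theorem ncard_tN1_le_of_tSeymour {ω : TOmega n} {v : Fin n} (h : tSeymour ω v) :
    ((tN1 ω v).ncard : ℝ) ≤ ((n : ℝ) - 1) / 2 := by
  have hlt := ncard_tN1_add_ncard_tN2_lt ω v
  have hle : (tN1 ω v).ncard ≤ (tN2 ω v).ncard := h
  have : ((tN1 ω v).ncard : ℝ) * 2 + 1 ≤ n := by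
    exact_mod_cast (by omega : (tN1 ω v).ncard * 2 + 1 ≤ n)
  rw [le_div_iff₀ two_pos]
  linarith

theorem tS_le_sum_indicator (ω : TOmega n) :
    (tS ω : ℝ) ≤
      ∑ v, {ω : TOmega n | ((tN1 ω v).ncard : ℝ) ≤ ((n : ℝ) - 1) / 2}.indicator (fun _ => 1) ω :=
  calc (tS ω : ℝ) ≤ ({v | ((tN1 ω v).ncard : ℝ) ≤ ((n : ℝ) - 1) / 2}.ncard : ℝ) :=
        Nat.cast_le.2 <| Set.ncard_le_ncard fun v => ncard_tN1_le_of_tSeymour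
    _ = _ := by
        classical
        rw [Set.ncard_eq_toFinset_card', Set.toFinset_ofPred, natCast_card_filter]
        simp [Set.indicator_apply]

end Tournament

theorem expected_seymour_upper_general (n : ℕ) :
    tES n ≤ (n : ℝ) * binHalfCdf (n - 1) (((n : ℝ) - 1) / 2)
      + ((n : ℝ) * ((n : ℝ) - 1) / 2) * (3 / 4 : ℝ) ^ (n - 2) := by
  have hdegree : tES n ≤ n * binHalfCdf (n - 1) (((n : ℝ) - 1) / 2) :=
    calc tES n
        ≤ tEx fun ω => ∑ v, {ω : TOmega n | ((tN1 ω v).ncard : ℝ) ≤ ((n : ℝ) - 1) / 2}.indicator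
            (fun _ => 1) ω := tEx_mono tS_le_sum_indicator
      _ = ∑ v : Fin n, tPr {ω : TOmega n | ((tN1 ω v).ncard : ℝ) ≤ ((n : ℝ) - 1) / 2} := by
        simp only [tEx_sum, tEx_indicator_one]
      _ = n * binHalfCdf (n - 1) (((n : ℝ) - 1) / 2) := by simp [tPr_ncard_tN1_le]
  have hpairs : 0 ≤ ((n : ℝ) * ((n : ℝ) - 1) / 2) * (3 / 4 : ℝ) ^ (n - 2) := by
    rw [← Nat.cast_choose_two]
    positivity
  linarith

/-- Upper bound on the expected number of Seymour vertices of the random tournament on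
`n ≥ 2` vertices:
`E(S_n) ≤ n · P(Bin(n-1, 1/2) ≤ (n-1)/2) + (n(n-1)/2) · (3/4)^(n-2)`. -/
theorem expected_seymour_upper (n : ℕ) (hn : 2 ≤ n) :
    tES n ≤ (n : ℝ) * binHalfCdf (n - 1) (((n : ℝ) - 1) / 2)
      + ((n : ℝ) * ((n : ℝ) - 1) / 2) * (3 / 4 : ℝ) ^ (n - 2) :=
  expected_seymour_upper_general n
end

section
/- Let S_n be the number of Seymour vertices of the random tournament T_n on n vertices. Then E(S_n)/(n/2) → 1 as n → ∞; that is, E(S_n) = (n/2)(1+o(1)). -/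
/-!
Each vertex `v` contributes `P(v is a Seymour vertex)` to `E(S_n)`, and this probability is
`1/2 + o(1)` uniformly in `v`.

Since `N₁(v)` and `N₂(v)` are disjoint sets of other vertices, a Seymour vertex has out-degree
at most `(n - 1)/2`. The out-degree is `Bin(n - 1, 1/2)`, so by symmetry this event has
probability `1/2` plus half the probability of a tie, and a tie has probability at most
`C(2t, t) / 4^t = O(1/√t)` with `t = ⌊(n - 1)/2⌋`.

Conversely, out-degree at most `(n - 1)/2` makes `v` a Seymour vertex as soon as every other
vertex `w` is reached from `v` by a path of length at most two, for then `N₂(v)` is the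
complement of `{v} ∪ N₁(v)`. For fixed `w ≠ v`, each of the `n - 2` remaining vertices `x`
independently fails to give a path `v → x → w` with probability `3/4`, so a union bound over
`w` loses at most `(n - 1) (3/4)^(n - 2)`.
-/

open Finset Function Filter Topology

namespace RandomTournament

variable {n : ℕ}

open Classical in
theorem tPr_eq_card (E : Set (TOmega n)) :
    tPr E = (#{ω | ω ∈ E} : ℝ) / Fintype.card (TOmega n) := by
  simp only [tPr, Set.indicator_apply, Finset.sum_boole]

theorem tPr_mono {E F : Set (TOmega n)} (h : E ⊆ F) : tPr E ≤ tPr F := by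
  simp only [tPr_eq_card]
  gcongr

theorem tPr_le_add_sum {ι : Type*} [Fintype ι] {E F : Set (TOmega n)} {G : ι → Set (TOmega n)}
    (h : E ⊆ F ∪ ⋃ i, G i) : tPr E ≤ tPr F + ∑ i, tPr (G i) := by
  classical
  simp only [tPr_eq_card, ← add_div, ← Finset.sum_div]
  gcongr
  calc (#{ω | ω ∈ E} : ℝ)
      ≤ #(({ω | ω ∈ F} : Finset _) ∪ univ.biUnion fun i => {ω | ω ∈ G i}) := by
        gcongr
        intro ω hω
        simpa using h (mem_filter.mp hω).2
    _ ≤ #{ω | ω ∈ F} + #(univ.biUnion fun i => ({ω | ω ∈ G i} : Finset _)) :=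
        mod_cast card_union_le _ _
    _ ≤ #{ω | ω ∈ F} + ∑ i, (#{ω | ω ∈ G i} : ℝ) := by
        gcongr
        exact_mod_cast card_biUnion_le

theorem xor_involutive (b : Bool) : Involutive (xor b) := by
  intro x; cases b <;> cases x <;> rfl

theorem card_filter_xor_comp_mem {α ι : Type*} [Fintype α] [DecidableEq α] [Fintype ι]
    [DecidableEq ι] {c : ι → α} (hc : Injective c) (b : ι → Bool)
    (G : Finset (ι → Bool)) :
    #{ω : α → Bool | (fun i => xor (b i) (ω (c i))) ∈ G} * 2 ^ Fintype.card ι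
      = #G * 2 ^ Fintype.card α := by
  let R := {a // a ∉ Set.range c} → Bool
  let e : (α → Bool) ≃ (ι → Bool) × R :=
    (Equiv.piEquivPiSubtypeProd (· ∈ Set.range c) fun _ => Bool).trans <|
      Equiv.prodCongr
        ((Equiv.arrowCongr (Equiv.ofInjective c hc).symm (Equiv.refl Bool)).trans
          (Equiv.piCongrRight fun i => (xor_involutive (b i)).toPerm))
        (Equiv.refl R)
  have hfilter :
      #{ω : α → Bool | (fun i => xor (b i) (ω (c i))) ∈ G} = #G * Fintype.card R :=
    calc #{ω : α → Bool | (fun i => xor (b i) (ω (c i))) ∈ G}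
        = #{z : (ι → Bool) × R | z.1 ∈ G} :=
          card_equiv e fun ω => by simp only [mem_filter, mem_univ, true_and]; rfl
      _ = #G * Fintype.card R := by
          rw [← card_univ (α := R), ← card_product]; congr 1; ext; simp
  have hcard : 2 ^ Fintype.card α = 2 ^ Fintype.card ι * Fintype.card R := by
    have h := Fintype.card_congr e
    rwa [Fintype.card_prod, Fintype.card_fun, Fintype.card_fun (α := ι), Fintype.card_bool] at h
  rw [hfilter, hcard]; ring

instance (ω : TOmega n) : DecidableRel (tadj ω) := fun i j => by
  unfold tadj; infer_instance

def arcPattern {ι : Type*} (p : ι → Fin n × Fin n) (ω : TOmega n) : ι → Bool :=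
  fun i => decide (tadj ω (p i).1 (p i).2)

theorem tadj_iff_xor {ω : TOmega n} {i j : Fin n} (h : i ≠ j) :
    tadj ω i j ↔ xor (decide (j < i)) (ω (i ⊓ j) (i ⊔ j)) = true := by
  rcases h.lt_or_gt with hij | hji
  · simp [tadj, h, hij, hij.le, not_lt_of_gt hij]
  · simp [tadj, h, hji, hji.le, not_lt_of_gt hji]

/-- The orientations of distinct edges are independent fair coins. -/
theorem tPr_arcPattern_mem {ι : Type*} [Fintype ι] [DecidableEq ι] {p : ι → Fin n × Fin n}
    (hloop : ∀ i, (p i).1 ≠ (p i).2) (hp : Injective fun i => s((p i).1, (p i).2))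
    (G : Finset (ι → Bool)) :
    tPr {ω | arcPattern p ω ∈ G} = #G / 2 ^ Fintype.card ι := by
  let c : ι → Fin n × Fin n := fun i => (s((p i).1, (p i).2).inf, s((p i).1, (p i).2).sup)
  have hc : Injective c := fun i j hij =>
    hp (Sym2.inf_eq_inf_and_sup_eq_sup.mp (Prod.ext_iff.mp hij))
  have hpat : ∀ ω, arcPattern p ω = fun i => xor (decide ((p i).2 < (p i).1))
      (uncurry ω (c i)) := fun ω => funext fun i => by
    rw [arcPattern, Bool.eq_iff_iff, decide_eq_true_iff, tadj_iff_xor (hloop i)]; rfl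
  have hcount := card_filter_xor_comp_mem hc (fun i => decide ((p i).2 < (p i).1)) G
  have hcurry : #{ω : TOmega n | arcPattern p ω ∈ G}
      = #{ω : Fin n × Fin n → Bool |
          (fun i => xor (decide ((p i).2 < (p i).1)) (ω (c i))) ∈ G} :=
    card_equiv (Equiv.curry _ _ _).symm fun ω => by simp [hpat]
  rw [tPr_eq_card, Fintype.card_congr (Equiv.curry _ _ _).symm]
  simp only [Set.mem_ofPred_eq]
  rw [hcurry, Fintype.card_fun, Fintype.card_bool, div_eq_div_iff (by positivity) (by positivity)]
  exact_mod_cast hcount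

section CountTrue

variable {ι : Type*} [Fintype ι]

def countTrue (g : ι → Bool) : ℕ := #{i | g i = true}

theorem countTrue_not_add_countTrue (g : ι → Bool) :
    countTrue (fun i => !g i) + countTrue g = Fintype.card ι := by
  have := card_filter_add_card_filter_not (s := (univ : Finset ι)) (fun i => g i = true)
  simpa [countTrue, add_comm] using this

variable [DecidableEq ι]

theorem card_countTrue_eq (k : ℕ) :
    #{g : ι → Bool | countTrue g = k} = (Fintype.card ι).choose k := by
  rw [← card_univ, ← card_powersetCard]
  refine card_nbij' (fun g => ({i | g i = true} : Finset ι)) (fun s i => decide (i ∈ s))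
    ?_ ?_ ?_ ?_ <;> intro x hx
  · rw [mem_coe, mem_filter] at hx
    simpa [countTrue] using hx.2
  · rw [mem_coe, mem_filter]
    simpa [countTrue] using hx
  · funext i; simp
  · ext i; simp

/-- Negation swaps the events `2 * countTrue g ≤ card ι` and `card ι ≤ 2 * countTrue g`, whose
union is everything. -/
theorem two_mul_card_two_mul_countTrue_le :
    2 * #{g : ι → Bool | 2 * countTrue g ≤ Fintype.card ι}
      = 2 ^ Fintype.card ι + #{g : ι → Bool | 2 * countTrue g = Fintype.card ι} := by
  have hsymm : #{g : ι → Bool | 2 * countTrue g ≤ Fintype.card ι}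
      = #{g : ι → Bool | Fintype.card ι ≤ 2 * countTrue g} := by
    refine card_nbij' (fun g i => !g i) (fun g i => !g i) ?_ ?_ ?_ ?_ <;> intro g hg
    · have := countTrue_not_add_countTrue g
      simp only [coe_filter, mem_univ, true_and, Set.mem_ofPred_eq] at hg ⊢; omega
    · have := countTrue_not_add_countTrue g
      simp only [coe_filter, mem_univ, true_and, Set.mem_ofPred_eq] at hg ⊢; omega
    · simp
    · simp
  have hunion := card_union_add_card_inter {g : ι → Bool | 2 * countTrue g ≤ Fintype.card ι}
    {g : ι → Bool | Fintype.card ι ≤ 2 * countTrue g}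
  rw [← filter_or, ← filter_and, filter_true_of_mem fun g _ => le_total _ _, card_univ,
    Fintype.card_fun, Fintype.card_bool] at hunion
  simp only [le_antisymm_iff (b := Fintype.card ι)] at hunion ⊢
  omega

theorem card_two_mul_countTrue_eq_le :
    #{g : ι → Bool | 2 * countTrue g = Fintype.card ι}
      ≤ (Fintype.card ι / 2).centralBinom := by
  rcases Nat.even_or_odd' (Fintype.card ι) with ⟨t, ht | ht⟩
  · simp only [ht, Nat.mul_left_cancel_iff two_pos, card_countTrue_eq,
      Nat.mul_div_cancel_left t two_pos, Nat.centralBinom_eq_two_mul_choose]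
    rfl
  · rw [filter_false_of_mem fun g _ => by omega]
    simp

end CountTrue

theorem card_filter_forall_not_and (σ : Type*) [Fintype σ] [DecidableEq σ] :
    #{g : σ × Bool → Bool | ∀ x, ¬(g (x, false) = true ∧ g (x, true) = true)}
      = 3 ^ Fintype.card σ := by
  let e : {g : σ × Bool → Bool // ∀ x, ¬(g (x, false) = true ∧ g (x, true) = true)}
      ≃ (σ → {h : Bool → Bool // ¬(h false = true ∧ h true = true)}) :=
    (Equiv.subtypeEquiv
      (q := fun f : σ → Bool → Bool => ∀ x, ¬(f x false = true ∧ f x true = true))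
      (Equiv.curry σ Bool Bool) fun _ => Iff.rfl).trans
      (Equiv.subtypePiEquivPi
        (p := fun _ (h : Bool → Bool) => ¬(h false = true ∧ h true = true)))
  rw [← Fintype.card_subtype, Fintype.card_congr e, Fintype.card_fun]
  rfl

theorem succ_mul_centralBinom_sq_le (m : ℕ) : (m + 1) * m.centralBinom ^ 2 ≤ 16 ^ m := by
  induction m with
  | zero => simp
  | succ m ih =>
    have hrec := Nat.succ_mul_centralBinom_succ m
    refine le_of_mul_le_mul_left (a := (m + 1) ^ 2) ?_ (by positivity)
    calc (m + 1) ^ 2 * ((m + 1 + 1) * (m + 1).centralBinom ^ 2)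
        = (m + 2) * ((m + 1) * (m + 1).centralBinom) ^ 2 := by ring
      _ = 4 * (m + 2) * (2 * m + 1) ^ 2 * m.centralBinom ^ 2 := by rw [hrec]; ring
      _ ≤ 16 * (m + 1) ^ 3 * m.centralBinom ^ 2 :=
          Nat.mul_le_mul_right _ (by nlinarith)
      _ = (m + 1) ^ 2 * (16 * ((m + 1) * m.centralBinom ^ 2)) := by ring
      _ ≤ (m + 1) ^ 2 * 16 ^ (m + 1) := by
          rw [pow_succ' 16 m]; exact Nat.mul_le_mul_left _ (Nat.mul_le_mul_left 16 ih)

theorem centralBinom_div_four_pow_le_sqrt (m : ℕ) :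
    (m.centralBinom : ℝ) / 4 ^ m ≤ √(1 / (m + 1)) := by
  rw [Real.le_sqrt (by positivity) (by positivity), div_pow, le_div_iff₀ (by positivity),
    div_mul_eq_mul_div, div_le_one (by positivity), ← pow_mul, mul_comm]
  have h := succ_mul_centralBinom_sq_le m
  rw [show 16 ^ m = 4 ^ (m * 2) by rw [pow_mul']; norm_num] at h
  exact_mod_cast h

theorem tendsto_centralBinom_div_four_pow :
    Tendsto (fun m : ℕ => (m.centralBinom : ℝ) / 4 ^ m) atTop (𝓝 0) := by
  have hsqrt : Tendsto (fun m : ℕ => √(1 / ((m : ℝ) + 1))) atTop (𝓝 0) := by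
    simpa using tendsto_one_div_add_atTop_nhds_zero_nat.sqrt
  exact squeeze_zero (fun m => by positivity) centralBinom_div_four_pow_le_sqrt hsqrt

theorem tendsto_natCast_mul_pow_pred {r : ℝ} (h0 : 0 ≤ r) (h1 : r < 1) :
    Tendsto (fun m : ℕ => (m : ℝ) * r ^ (m - 1)) atTop (𝓝 0) := by
  rw [← tendsto_add_atTop_iff_nat 1]
  simpa [add_mul] using
    (tendsto_self_mul_const_pow_of_lt_one h0 h1).add (tendsto_pow_atTop_nhds_zero_of_lt_one h0 h1)

def lowOutdeg (v : Fin n) : Set (TOmega n) := {ω | 2 * (tN1 ω v).ncard ≤ n - 1}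

def noTwoPath (v w : Fin n) : Set (TOmega n) := {ω | ∀ x, tadj ω v x → ¬ tadj ω x w}

theorem ncard_tN1_add_ncard_tN2_le (ω : TOmega n) (v : Fin n) :
    (tN1 ω v).ncard + (tN2 ω v).ncard ≤ n - 1 := by
  have hdisj : Disjoint (tN1 ω v) (tN2 ω v) := Set.disjoint_left.mpr fun _ h1 h2 => h2.2.1 h1
  have hsub : tN1 ω v ∪ tN2 ω v ⊆ {v}ᶜ := by
    rintro w (hw | hw)
    · exact Ne.symm hw.1
    · exact hw.1
  calc (tN1 ω v).ncard + (tN2 ω v).ncard = (tN1 ω v ∪ tN2 ω v).ncard :=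
        (Set.ncard_union_eq hdisj).symm
    _ ≤ ({v}ᶜ : Set (Fin n)).ncard := Set.ncard_le_ncard hsub
    _ = n - 1 := by rw [Set.ncard_compl, Set.ncard_singleton, Nat.card_fin]

theorem setOf_tSeymour_subset_lowOutdeg (v : Fin n) : {ω | tSeymour ω v} ⊆ lowOutdeg v := by
  intro ω (h : tSeymour ω v)
  have := ncard_tN1_add_ncard_tN2_le ω v
  unfold tSeymour at h
  show 2 * (tN1 ω v).ncard ≤ n - 1
  omega

/-- If every other vertex is reached from `v` in at most two steps, `N₂(v)` is the complement
of `{v} ∪ N₁(v)`. -/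
theorem tSeymour_of_forall_exists_path {ω : TOmega n} {v : Fin n} (hdeg : ω ∈ lowOutdeg v)
    (hpath : ∀ w ≠ v, ∃ x, tadj ω v x ∧ tadj ω x w) : tSeymour ω v := by
  have hcover : Set.univ ⊆ {v} ∪ tN1 ω v ∪ tN2 ω v := by
    intro w _
    by_cases hwv : w = v
    · exact Or.inl (Or.inl hwv)
    by_cases hvw : tadj ω v w
    · exact Or.inl (Or.inr hvw)
    · exact Or.inr ⟨hwv, hvw, hpath w hwv⟩
  have hcard := Set.ncard_le_ncard hcover
  have hunion₁ := Set.ncard_union_le ({v} ∪ tN1 ω v) (tN2 ω v)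
  have hunion₂ := Set.ncard_union_le {v} (tN1 ω v)
  rw [Set.ncard_univ, Nat.card_fin] at hcard
  rw [Set.ncard_singleton] at hunion₂
  change 2 * (tN1 ω v).ncard ≤ n - 1 at hdeg
  unfold tSeymour
  omega

theorem lowOutdeg_subset (v : Fin n) :
    lowOutdeg v ⊆ {ω | tSeymour ω v} ∪ ⋃ w : {w // w ≠ v}, noTwoPath v w := by
  intro ω hdeg
  by_cases hpath : ∀ w ≠ v, ∃ x, tadj ω v x ∧ tadj ω x w
  · exact Or.inl (tSeymour_of_forall_exists_path hdeg hpath)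
  · push Not at hpath
    obtain ⟨w, hwv, hw⟩ := hpath
    exact Or.inr (Set.mem_iUnion.mpr ⟨⟨w, hwv⟩, hw⟩)

theorem card_subtype_ne (v : Fin n) : Fintype.card {j // j ≠ v} = n - 1 := by
  rw [Fintype.card_subtype_compl, Fintype.card_subtype_eq, Fintype.card_fin]

theorem card_subtype_ne_and_ne {v w : Fin n} (hvw : v ≠ w) :
    Fintype.card {x // x ≠ v ∧ x ≠ w} = n - 2 := by
  rw [Fintype.card_subtype, show ({x | x ≠ v ∧ x ≠ w} : Finset (Fin n)) = univ \ {v, w} by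
    ext; simp, card_sdiff_of_subset (subset_univ _), card_univ, Fintype.card_fin, card_pair hvw]

theorem ncard_tN1_eq_countTrue (ω : TOmega n) (v : Fin n) :
    (tN1 ω v).ncard = countTrue (arcPattern (fun j : {j // j ≠ v} => (v, j.1)) ω) := by
  rw [countTrue, ← Set.ncard_coe_finset]
  refine Set.ncard_congr (fun w hw => ⟨w, Ne.symm hw.1⟩) ?_ ?_ ?_
  · intro w hw; simp [arcPattern]; exact hw
  · intro a b _ _ h; simpa using h
  · rintro ⟨j, hj⟩ hmem; exact ⟨j, (by simpa [arcPattern] using hmem : tadj ω v j), rfl⟩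

theorem two_mul_tPr_lowOutdeg (v : Fin n) :
    2 * tPr (lowOutdeg v)
      = 1 + (#{g : {j // j ≠ v} → Bool | 2 * countTrue g = n - 1} : ℝ) / 2 ^ (n - 1) := by
  have hset : lowOutdeg v = {ω | arcPattern (fun j : {j // j ≠ v} => (v, j.1)) ω
      ∈ ({g | 2 * countTrue g ≤ n - 1} : Finset _)} := by
    ext ω; simp [lowOutdeg, ncard_tN1_eq_countTrue]
  have hcount := two_mul_card_two_mul_countTrue_le (ι := {j // j ≠ v})
  rw [card_subtype_ne] at hcount
  rw [hset, tPr_arcPattern_mem (fun j => Ne.symm j.2)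
    (fun j j' h => Subtype.ext (Sym2.congr_right.mp h)), card_subtype_ne]
  field_simp
  exact_mod_cast hcount

theorem tPr_noTwoPath_le {v w : Fin n} (hvw : v ≠ w) :
    tPr (noTwoPath v w) ≤ (3 / 4) ^ (n - 2) := by
  let p : {x // x ≠ v ∧ x ≠ w} × Bool → Fin n × Fin n :=
    fun i => if i.2 then (i.1.1, w) else (v, i.1.1)
  have hloop : ∀ i, (p i).1 ≠ (p i).2 := by
    rintro ⟨⟨x, hxv, hxw⟩, _ | _⟩
    · exact Ne.symm hxv
    · exact hxw
  have hp : Injective fun i => s((p i).1, (p i).2) := by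
    rintro ⟨⟨x, hxv, hxw⟩, _ | _⟩ ⟨⟨y, hyv, hyw⟩, _ | _⟩ h <;>
      simp [p] at h <;> aesop
  have hsub : noTwoPath v w ⊆ {ω | arcPattern p ω
      ∈ ({g | ∀ x, ¬(g (x, false) = true ∧ g (x, true) = true)} : Finset _)} := by
    intro ω hω
    simpa [arcPattern, p] using fun x _ _ => hω x
  calc _ ≤ _ := tPr_mono hsub
    _ = (3 / 4) ^ (n - 2) := by
      rw [tPr_arcPattern_mem hloop hp, card_filter_forall_not_and, Fintype.card_prod,
        card_subtype_ne_and_ne hvw, Fintype.card_bool, div_pow, pow_mul']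
      norm_num

theorem tPr_tSeymour_le (v : Fin n) :
    tPr {ω : TOmega n | tSeymour ω v}
      ≤ 1 / 2 + ((n - 1) / 2).centralBinom / 4 ^ ((n - 1) / 2) / 2 := by
  have hmono := tPr_mono (setOf_tSeymour_subset_lowOutdeg v)
  have hhalf := two_mul_tPr_lowOutdeg v
  have hcount := card_two_mul_countTrue_eq_le (ι := {j // j ≠ v})
  rw [card_subtype_ne] at hcount
  have hpow : (4 : ℝ) ^ ((n - 1) / 2) ≤ 2 ^ (n - 1) := by
    rw [show (4 : ℝ) = 2 ^ 2 by norm_num, ← pow_mul]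
    exact pow_le_pow_right₀ one_le_two (Nat.mul_div_le _ _)
  have htie : (#{g : {j // j ≠ v} → Bool | 2 * countTrue g = n - 1} : ℝ) / 2 ^ (n - 1)
      ≤ ((n - 1) / 2).centralBinom / 4 ^ ((n - 1) / 2) := by
    gcongr
  linarith

theorem sub_le_tPr_tSeymour (v : Fin n) :
    1 / 2 - ((n - 1 : ℕ) : ℝ) * (3 / 4) ^ (n - 2) ≤ tPr {ω : TOmega n | tSeymour ω v} := by
  have hsum : ∑ w : {w // w ≠ v}, tPr (noTwoPath v w)
      ≤ ((n - 1 : ℕ) : ℝ) * (3 / 4) ^ (n - 2) := by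
    refine (sum_le_sum fun w _ => tPr_noTwoPath_le (Ne.symm w.2)).trans_eq ?_
    rw [sum_const, card_univ, card_subtype_ne, nsmul_eq_mul]
  have hhalf := two_mul_tPr_lowOutdeg v
  have htie :
      0 ≤ (#{g : {j // j ≠ v} → Bool | 2 * countTrue g = n - 1} : ℝ) / 2 ^ (n - 1) := by
    positivity
  linarith [tPr_le_add_sum (lowOutdeg_subset v)]

theorem tES_eq_sum_tPr (n : ℕ) : tES n = ∑ v : Fin n, tPr {ω : TOmega n | tSeymour ω v} := by
  classical
  have hS : ∀ ω : TOmega n, (tS ω : ℝ) = ∑ v, if tSeymour ω v then 1 else 0 := by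
    intro ω
    rw [sum_boole, tS, Set.ncard_eq_toFinset_card', Set.toFinset_ofPred]
  simp only [tES, tEx, tPr, hS, ← sum_div, Set.indicator_apply, Set.mem_ofPred_eq]
  rw [sum_comm]

theorem le_tES_div {lo : ℝ} (h : ∀ v : Fin n, lo ≤ tPr {ω : TOmega n | tSeymour ω v})
    (hn : 0 < n) :
    2 * lo ≤ tES n / (n / 2) := by
  have := sum_le_sum fun v (_ : v ∈ univ) => h v
  rw [sum_const, card_univ, Fintype.card_fin, nsmul_eq_mul, ← tES_eq_sum_tPr] at this
  rw [le_div_iff₀ (by positivity)]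
  linarith

theorem tES_div_le {hi : ℝ} (h : ∀ v : Fin n, tPr {ω : TOmega n | tSeymour ω v} ≤ hi)
    (hn : 0 < n) :
    tES n / (n / 2) ≤ 2 * hi := by
  have := sum_le_sum fun v (_ : v ∈ univ) => h v
  rw [sum_const, card_univ, Fintype.card_fin, nsmul_eq_mul, ← tES_eq_sum_tPr] at this
  rw [div_le_iff₀ (by positivity)]
  linarith

end RandomTournament

open RandomTournament in
/-- The expected number of Seymour vertices of the random tournament on `n` vertices
satisfies `E(S_n) = (n/2)(1 + o(1))`, i.e. `E(S_n) / (n/2) → 1` as `n → ∞`. -/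
theorem expected_seymour_asymptotic :
    Filter.Tendsto (fun n : ℕ => tES n / ((n : ℝ) / 2)) Filter.atTop (nhds 1) := by
  have htie : Tendsto (fun n : ℕ => (((n - 1) / 2).centralBinom : ℝ) / 4 ^ ((n - 1) / 2))
      atTop (𝓝 0) :=
    tendsto_centralBinom_div_four_pow.comp
      ((Nat.tendsto_div_const_atTop two_ne_zero).comp (tendsto_sub_atTop_nat 1))
  have hpath :
      Tendsto (fun n : ℕ => ((n - 1 : ℕ) : ℝ) * (3 / 4) ^ (n - 2)) atTop (𝓝 0) := by
    simpa [Function.comp_def, Nat.sub_sub] using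
      (tendsto_natCast_mul_pow_pred (r := 3 / 4) (by norm_num) (by norm_num)).comp
        (tendsto_sub_atTop_nat 1)
  have hlower : Tendsto (fun n : ℕ => 2 * (1 / 2 - ((n - 1 : ℕ) : ℝ) * (3 / 4) ^ (n - 2)))
      atTop (𝓝 1) := by
    simpa using (hpath.const_sub (1 / 2 : ℝ)).const_mul 2
  have hupper : Tendsto (fun n : ℕ =>
      2 * (1 / 2 + (((n - 1) / 2).centralBinom : ℝ) / 4 ^ ((n - 1) / 2) / 2)) atTop (𝓝 1) := by
    simpa using ((htie.div_const 2).const_add (1 / 2 : ℝ)).const_mul 2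
  refine tendsto_of_tendsto_of_tendsto_of_le_of_le' hlower hupper ?_ ?_ <;>
  filter_upwards [eventually_gt_atTop 0] with n hn
  · exact le_tES_div sub_le_tPr_tSeymour hn
  · exact tES_div_le tPr_tSeymour_le hn
end

section
/- Let S_n be the number of Seymour vertices of the random tournament T_n on n vertices. Then, along even values of n, Var(S_n)/n converges as n → ∞ to the constant 1/4 − 1/(2π). -/
/-! For `n = 2m + 2`, a Seymour vertex has out-degree at most `m`; conversely a vertex of
out-degree at most `m` can fail to be a Seymour vertex only if some other vertex beats all of its
out-neighbours, an event of probability at most `(3/4)^(n-2)` for each candidate. Hence `S_n`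
differs, by an exponentially small amount in mean, from the number of vertices of out-degree at
most `m`, whose variance is computed exactly: each indicator has mean `1/2`, and conditioning on
the edge between two vertices makes their out-degrees independent binomials on the other `2m`
vertices, giving covariance `-c²/4` with `c = C(2m, m)/4^m`. So
`Var(S_n)/n = (1 - (2m+1)c²)/4 + o(1)`, and `(2m+1)c²` is the reciprocal of the `m`-th Wallis
product, which tends to `π/2`. -/

open Finset Filter Topology

lemma binHalfCdf_eq_sum_range {N j : ℕ} {x : ℝ} (hj : j ≤ N + 1)
    (hx : ∀ i : ℕ, (i : ℝ) ≤ x ↔ i < j) :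
    binHalfCdf N x = (∑ i ∈ range j, (N.choose i : ℝ)) / 2 ^ N := by
  have hrange : (range (N + 1)).filter (· < j) = range j := by
    ext i; simp only [mem_filter, mem_range]; omega
  simp only [binHalfCdf, hx, ← sum_filter, hrange, ← sum_mul, div_eq_mul_inv, one_mul, inv_pow]

lemma sum_range_choose_two_mul_add (m : ℕ) :
    ∑ i ∈ range m, (2 * m).choose i + ∑ i ∈ range (m + 1), (2 * m).choose i = 4 ^ m := by
  rw [← Nat.sum_range_choose_halfway m, sum_range_succ' _ m, sum_range_succ' (fun i => _) m]
  simp only [Nat.choose_succ_succ', sum_add_distrib, Nat.choose_zero_right]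
  ring

lemma binHalfCdf_two_mul_add_one (m : ℕ) : binHalfCdf (2 * m + 1) m = 1 / 2 := by
  rw [binHalfCdf_eq_sum_range (j := m + 1) (by omega) fun i => by
    rw [Nat.cast_le, Nat.lt_succ_iff]]
  rw [← Nat.cast_sum, Nat.sum_range_choose_halfway, pow_succ, pow_mul]
  field_simp
  norm_num

lemma binHalfCdf_two_mul_sub_one_mul (m : ℕ) :
    binHalfCdf (2 * m) ((m : ℝ) - 1) * binHalfCdf (2 * m) m
      = (1 - ((2 * m).choose m / 4 ^ m : ℝ) ^ 2) / 4 := by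
  have hsum := sum_range_choose_two_mul_add m
  rw [sum_range_succ] at hsum
  rw [binHalfCdf_eq_sum_range (j := m) (by omega) fun i => by
      rw [le_sub_iff_add_le, ← Nat.cast_succ, Nat.cast_le, Nat.succ_le_iff],
    binHalfCdf_eq_sum_range (j := m + 1) (by omega) fun i => by
      rw [Nat.cast_le, Nat.lt_succ_iff], sum_range_succ, pow_mul]
  set A := ∑ i ∈ range m, ((2 * m).choose i : ℝ)
  have hA : A = (4 ^ m - (2 * m).choose m) / 2 := by
    have := congrArg (Nat.cast (R := ℝ)) hsum
    push_cast at this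
    linarith
  rw [hA]
  field_simp
  ring

lemma Real.Wallis.inv_W_eq (m : ℕ) :
    (Real.Wallis.W m)⁻¹ = (2 * m + 1) * ((2 * m).choose m / 4 ^ m : ℝ) ^ 2 := by
  rw [Real.Wallis.W_eq_factorial_ratio, Nat.cast_choose ℝ (by omega : m ≤ 2 * m),
    show 2 * m - m = m by omega]
  have h1 : (m.factorial : ℝ) ≠ 0 := by positivity
  have h2 : ((2 * m).factorial : ℝ) ≠ 0 := by positivity
  rw [show (4 : ℝ) ^ m = 2 ^ (2 * m) by rw [pow_mul]; norm_num]
  field_simp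
  ring

namespace Tournament

variable {n m : ℕ}

noncomputable def ind (P : Prop) : ℝ := by classical exact if P then 1 else 0

lemma ind_of {P : Prop} (h : P) : ind P = 1 := by simp [ind, h]

lemma ind_of_not {P : Prop} (h : ¬P) : ind P = 0 := by simp [ind, h]

lemma ind_nonneg (P : Prop) : 0 ≤ ind P := by
  by_cases h : P <;> simp [ind_of, ind_of_not, h]

lemma ind_le_one (P : Prop) : ind P ≤ 1 := by
  by_cases h : P <;> simp [ind_of, ind_of_not, h]

lemma ind_mono {P Q : Prop} (h : P → Q) : ind P ≤ ind Q := by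
  by_cases hP : P
  · rw [ind_of hP, ind_of (h hP)]
  · rw [ind_of_not hP]; exact ind_nonneg Q

lemma ind_congr {P Q : Prop} (h : P ↔ Q) : ind P = ind Q := by rw [h]

lemma ind_and (P Q : Prop) : ind (P ∧ Q) = ind P * ind Q := by
  by_cases hP : P <;> by_cases hQ : Q <;> simp [ind_of, ind_of_not, hP, hQ]

lemma ind_not (P : Prop) : ind (¬P) = 1 - ind P := by
  by_cases hP : P <;> simp [ind_of, ind_of_not, hP]

lemma ind_imp (P Q : Prop) : ind (P → Q) = 1 - ind P * ind (¬Q) := by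
  rw [← ind_and, ← ind_not, not_and_not_right]

lemma ind_forall_mem {ι : Type*} (s : Finset ι) (P : ι → Prop) :
    ind (∀ i ∈ s, P i) = ∏ i ∈ s, ind (P i) := by
  classical
  induction s using Finset.induction with
  | empty => simp [ind_of]
  | insert i s hi ih => rw [prod_insert hi, ← ih, ← ind_and, forall_mem_insert]

lemma tEx_congr {f g : TOmega n → ℝ} (h : ∀ ω, f ω = g ω) : tEx f = tEx g := by
  rw [funext h]

lemma tEx_const (c : ℝ) : tEx (fun _ : TOmega n => c) = c := by
  rw [tEx, sum_const, card_univ, nsmul_eq_mul, mul_div_cancel_left₀]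
  exact Nat.cast_ne_zero.mpr Fintype.card_ne_zero

lemma tEx_add (f g : TOmega n → ℝ) : tEx (fun ω => f ω + g ω) = tEx f + tEx g := by
  rw [tEx, sum_add_distrib, add_div]; rfl

lemma tEx_sub (f g : TOmega n → ℝ) : tEx (fun ω => f ω - g ω) = tEx f - tEx g := by
  rw [tEx, sum_sub_distrib, sub_div]; rfl

lemma tEx_const_mul (c : ℝ) (f : TOmega n → ℝ) : tEx (fun ω => c * f ω) = c * tEx f := by
  rw [tEx, ← mul_sum, mul_div_assoc]; rfl

lemma tEx_sum {ι : Type*} (s : Finset ι) (f : ι → TOmega n → ℝ) :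
    tEx (fun ω => ∑ i ∈ s, f i ω) = ∑ i ∈ s, tEx (f i) := by
  rw [tEx, sum_comm, sum_div]; rfl

lemma tEx_mono {f g : TOmega n → ℝ} (h : ∀ ω, f ω ≤ g ω) : tEx f ≤ tEx g :=
  div_le_div_of_nonneg_right (sum_le_sum fun ω _ => h ω) (Nat.cast_nonneg _)

lemma tEx_comp_equiv (e : TOmega n ≃ TOmega n) (f : TOmega n → ℝ) :
    tEx (fun ω => f (e ω)) = tEx f := by
  rw [tEx, e.sum_comp f]; rfl

lemma tadj_congr {ω ω' : TOmega n} {a b : Fin n} (hab : ω a b = ω' a b)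
    (hba : ω b a = ω' b a) :
    tadj ω a b ↔ tadj ω' a b := by
  unfold tadj; split_ifs <;> simp [hab, hba]

lemma tadj_comm_iff_not {ω : TOmega n} {a b : Fin n} (h : a ≠ b) :
    tadj ω b a ↔ ¬tadj ω a b := by
  unfold tadj
  rcases h.lt_or_gt with hab | hab <;> simp [h, h.symm, hab, hab.not_gt]

/-- Phrased through `tadj` rather than the coordinates of `ω`, so that the orientation of an edge
is a single unordered datum. -/
def DependsOnEdges {β : Type*} (f : TOmega n → β) (E : Set (Sym2 (Fin n))) : Prop :=
  ∀ ⦃ω ω' : TOmega n⦄,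
    (∀ a b, s(a, b) ∈ E → (tadj ω a b ↔ tadj ω' a b)) → f ω = f ω'

lemma DependsOnEdges.mono {β : Type*} {f : TOmega n → β} {E F : Set (Sym2 (Fin n))}
    (hf : DependsOnEdges f E) (hEF : E ⊆ F) : DependsOnEdges f F :=
  fun _ _ h => hf fun a b hab => h a b (hEF hab)

lemma DependsOnEdges.comp {β γ : Type*} {f : TOmega n → β} {E : Set (Sym2 (Fin n))}
    (hf : DependsOnEdges f E) (g : β → γ) : DependsOnEdges (fun ω => g (f ω)) E :=
  fun _ _ h => congrArg g (hf h)

lemma dependsOnEdges_tadj (a b : Fin n) : DependsOnEdges (fun ω => tadj ω a b) {s(a, b)} :=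
  fun _ _ h => propext (h a b rfl)

lemma DependsOnEdges.mul {f g : TOmega n → ℝ} {E : Set (Sym2 (Fin n))}
    (hf : DependsOnEdges f E) (hg : DependsOnEdges g E) :
    DependsOnEdges (fun ω => f ω * g ω) E :=
  fun _ _ h => congrArg₂ (· * ·) (hf h) (hg h)

lemma dependsOnEdges_prod {ι : Type*} {s : Finset ι} {f : ι → TOmega n → ℝ}
    {E : Set (Sym2 (Fin n))} (hf : ∀ i ∈ s, DependsOnEdges (f i) E) :
    DependsOnEdges (fun ω => ∏ i ∈ s, f i ω) E :=
  fun _ _ h => prod_congr rfl fun i hi => hf i hi h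

noncomputable def mixOn (E : Set (Sym2 (Fin n))) (ω ω' : TOmega n) : TOmega n := by
  classical exact fun i j => if s(i, j) ∈ E then ω i j else ω' i j

lemma tadj_mixOn_of_mem {E : Set (Sym2 (Fin n))} (ω ω' : TOmega n) {a b : Fin n}
    (h : s(a, b) ∈ E) : tadj (mixOn E ω ω') a b ↔ tadj ω a b :=
  tadj_congr (by simp [mixOn, h]) (by simp [mixOn, Sym2.eq_swap, h])

lemma tadj_mixOn_of_notMem {E : Set (Sym2 (Fin n))} (ω ω' : TOmega n) {a b : Fin n}
    (h : s(a, b) ∉ E) : tadj (mixOn E ω ω') a b ↔ tadj ω' a b :=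
  tadj_congr (by simp [mixOn, h]) (by simp [mixOn, Sym2.eq_swap, h])

lemma mixOn_mixOn (E : Set (Sym2 (Fin n))) (ω ω' : TOmega n) :
    mixOn E (mixOn E ω ω') (mixOn E ω' ω) = ω := by
  funext i j; by_cases h : s(i, j) ∈ E <;> simp [mixOn, h]

/-- Swapping the `E`-coordinates of two samples is a bijection of pairs of samples. -/
theorem tEx_mul_of_disjoint {f g : TOmega n → ℝ} {E F : Set (Sym2 (Fin n))}
    (hf : DependsOnEdges f E) (hg : DependsOnEdges g F) (hEF : Disjoint E F) :
    tEx (fun ω => f ω * g ω) = tEx f * tEx g := by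
  let σ : Function.Involutive fun p : TOmega n × TOmega n => (mixOn E p.1 p.2, mixOn E p.2 p.1) :=
    fun p => by simp only [mixOn_mixOn]
  have hmix : ∀ ω ω' : TOmega n, f ω * g ω' = f (mixOn E ω ω') * g (mixOn E ω ω') := by
    intro ω ω'
    rw [hf fun a b h => (tadj_mixOn_of_mem ω ω' h).symm,
      hg fun a b h => (tadj_mixOn_of_notMem ω ω' (hEF.notMem_of_mem_right h)).symm]
  have key : (∑ ω, f ω) * ∑ ω, g ω = Fintype.card (TOmega n) * ∑ ω, f ω * g ω := by
    calc (∑ ω, f ω) * ∑ ω, g ω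
        = ∑ p : TOmega n × TOmega n, f (mixOn E p.1 p.2) * g (mixOn E p.1 p.2) := by
          rw [sum_mul_sum, ← Finset.sum_product', univ_product_univ]
          exact sum_congr rfl fun p _ => hmix p.1 p.2
      _ = ∑ p : TOmega n × TOmega n, f p.1 * g p.1 :=
          Equiv.sum_comp σ.toPerm (fun p : TOmega n × TOmega n => f p.1 * g p.1)
      _ = Fintype.card (TOmega n) * ∑ ω, f ω * g ω := by
          simp only [Fintype.sum_prod_type, sum_const, card_univ, nsmul_eq_mul, mul_sum]
  have hN : (Fintype.card (TOmega n) : ℝ) ≠ 0 := Nat.cast_ne_zero.mpr Fintype.card_ne_zero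
  simp only [tEx]
  rw [div_mul_div_comm, key]
  field_simp

theorem tEx_prod_of_pairwiseDisjoint {ι : Type*} (s : Finset ι) {f : ι → TOmega n → ℝ}
    {E : ι → Set (Sym2 (Fin n))} (hf : ∀ i ∈ s, DependsOnEdges (f i) (E i))
    (hE : (s : Set ι).PairwiseDisjoint E) :
    tEx (fun ω => ∏ i ∈ s, f i ω) = ∏ i ∈ s, tEx (f i) := by
  classical
  induction s using Finset.induction with
  | empty => simpa using tEx_const (n := n) 1
  | insert i s hi ih =>
    rw [coe_insert, Set.pairwiseDisjoint_insert_of_notMem (mem_coe.not.2 hi)] at hE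
    have hrest : DependsOnEdges (fun ω => ∏ j ∈ s, f j ω) (⋃ j ∈ s, E j) :=
      dependsOnEdges_prod fun j hj =>
        (hf j (mem_insert_of_mem hj)).mono (Set.subset_biUnion_of_mem (u := E) (mem_coe.2 hj))
    simp only [prod_insert hi]
    rw [tEx_mul_of_disjoint (hf i (mem_insert_self i s)) hrest
      (Set.disjoint_iUnion₂_right.2 fun j hj => hE.2 j hj),
      ih (fun j hj => hf j (mem_insert_of_mem hj)) hE.1]

noncomputable def reverseEdge (e : Sym2 (Fin n)) : TOmega n ≃ TOmega n := by
  classical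
  exact Function.Involutive.toPerm (fun ω i j => if s(i, j) = e then !ω i j else ω i j)
    fun ω => by funext i j; by_cases h : s(i, j) = e <;> simp [h]

lemma tadj_reverseEdge (ω : TOmega n) {a b : Fin n} (h : a ≠ b) :
    tadj (reverseEdge s(a, b) ω) a b ↔ ¬tadj ω a b := by
  simp only [reverseEdge, tadj]
  split_ifs <;> simp [h]

lemma tEx_ind_tadj {a b : Fin n} (h : a ≠ b) : tEx (fun ω => ind (tadj ω a b)) = 1 / 2 := by
  have hflip := tEx_comp_equiv (reverseEdge s(a, b)) fun ω => ind (tadj ω a b)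
  simp only [tadj_reverseEdge _ h, ind_not, tEx_sub, tEx_const] at hflip
  linarith

lemma tEx_ind_not_tadj {a b : Fin n} (h : a ≠ b) :
    tEx (fun ω => ind (¬tadj ω a b)) = 1 / 2 := by
  simp_rw [← tadj_comm_iff_not h]
  exact tEx_ind_tadj h.symm

noncomputable def outNbrsIn (ω : TOmega n) (u : Fin n) (T : Finset (Fin n)) : Finset (Fin n) := by
  classical exact T.filter fun x => tadj ω u x

lemma mem_outNbrsIn {ω : TOmega n} {u x : Fin n} {T : Finset (Fin n)} :
    x ∈ outNbrsIn ω u T ↔ x ∈ T ∧ tadj ω u x := by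
  simp [outNbrsIn]

lemma dependsOnEdges_outNbrsIn (u : Fin n) (T : Finset (Fin n)) :
    DependsOnEdges (fun ω => outNbrsIn ω u T) ((fun x => s(u, x)) '' T) := fun ω ω' h => by
  ext x
  simp only [mem_outNbrsIn, and_congr_right_iff]
  exact fun hx => h u x ⟨x, hx, rfl⟩

lemma tEx_ind_outNbrsIn_eq {u : Fin n} {T S : Finset (Fin n)} (hu : u ∉ T) (hS : S ⊆ T) :
    tEx (fun ω => ind (outNbrsIn ω u T = S)) = (1 / 2) ^ #T := by
  have hpt : ∀ ω, ind (outNbrsIn ω u T = S) = ∏ x ∈ T, ind (tadj ω u x ↔ x ∈ S) := by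
    intro ω
    rw [← ind_forall_mem]
    refine ind_congr ⟨fun h x hx => by simp [← h, mem_outNbrsIn, hx], fun h => ?_⟩
    ext x
    rw [mem_outNbrsIn]
    exact ⟨fun hx => (h x hx.1).1 hx.2, fun hx => ⟨hS hx, (h x (hS hx)).2 hx⟩⟩
  have hne : ∀ x ∈ T, u ≠ x := fun x hx hux => hu (hux ▸ hx)
  rw [tEx_congr hpt, tEx_prod_of_pairwiseDisjoint T (E := fun x => {s(u, x)})
    (fun x _ => (dependsOnEdges_tadj u x).comp fun P => ind (P ↔ x ∈ S)), ← prod_const]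
  · refine prod_congr rfl fun x hx => ?_
    by_cases hxS : x ∈ S
    · simpa [hxS] using tEx_ind_tadj (hne x hx)
    · simpa [hxS] using tEx_ind_not_tadj (hne x hx)
  · intro x hx y hy hxy
    simp only [Function.onFun, Set.disjoint_singleton, ne_eq, Sym2.eq_iff]
    rintro (⟨-, rfl⟩ | ⟨rfl, -⟩)
    exacts [hxy rfl, hne _ hy rfl]

theorem tEx_ind_card_outNbrsIn_le {u : Fin n} {T : Finset (Fin n)} (hu : u ∉ T) (x : ℝ) :
    tEx (fun ω => ind ((#(outNbrsIn ω u T) : ℝ) ≤ x)) = binHalfCdf #T x := by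
  have hpt : ∀ ω, ind ((#(outNbrsIn ω u T) : ℝ) ≤ x)
      = ∑ S ∈ T.powerset, ind ((#S : ℝ) ≤ x) * ind (outNbrsIn ω u T = S) := by
    intro ω
    have hmem : outNbrsIn ω u T ∈ T.powerset :=
      mem_powerset.2 fun y hy => (mem_outNbrsIn.1 hy).1
    rw [sum_eq_single_of_mem _ hmem fun S _ hS => by rw [ind_of_not (Ne.symm hS), mul_zero],
      ind_of rfl, mul_one]
  rw [tEx_congr hpt, tEx_sum]
  rw [sum_congr rfl fun S hS => by
    rw [tEx_const_mul, tEx_ind_outNbrsIn_eq hu (mem_powerset.1 hS)]]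
  rw [sum_powerset_apply_card (fun i => ind ((i : ℝ) ≤ x) * (1 / 2) ^ #T), binHalfCdf]
  refine sum_congr rfl fun i _ => ?_
  by_cases hi : (i : ℝ) ≤ x <;> simp [hi, ind_of, ind_of_not]

theorem tEx_ind_tadj_mul_outNbrsIn {u v : Fin n} {T : Finset (Fin n)} (huv : u ≠ v)
    (hu : u ∉ T) (hv : v ∉ T) (x y : ℝ) :
    tEx (fun ω => ind (tadj ω u v) * (ind ((#(outNbrsIn ω u T) : ℝ) ≤ x)
      * ind ((#(outNbrsIn ω v T) : ℝ) ≤ y)))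
      = 1 / 2 * (binHalfCdf #T x * binHalfCdf #T y) := by
  have hdu := (dependsOnEdges_outNbrsIn u T).comp fun S => ind ((#S : ℝ) ≤ x)
  have hdv := (dependsOnEdges_outNbrsIn v T).comp fun S => ind ((#S : ℝ) ≤ y)
  rw [tEx_mul_of_disjoint ((dependsOnEdges_tadj u v).comp ind)
      ((hdu.mono Set.subset_union_left).mul (hdv.mono Set.subset_union_right)),
    tEx_mul_of_disjoint hdu hdv, tEx_ind_tadj huv, tEx_ind_card_outNbrsIn_le hu,
    tEx_ind_card_outNbrsIn_le hv]
  · rw [Set.disjoint_left]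
    rintro _ ⟨z, hz, rfl⟩ ⟨w, hw, h⟩
    rcases Sym2.eq_iff.1 h with ⟨h1, -⟩ | ⟨h1, -⟩
    exacts [huv h1.symm, hv (h1 ▸ hz)]
  · rw [Set.disjoint_singleton_left]
    rintro (⟨z, hz, h⟩ | ⟨z, hz, h⟩) <;>
      rcases Sym2.eq_iff.1 h with ⟨h1, h2⟩ | ⟨h1, h2⟩
    exacts [hv (h2 ▸ hz), huv h1, huv h1.symm, hu (h2 ▸ hz)]

lemma ncard_tN1 (ω : TOmega n) (v : Fin n) :
    (tN1 ω v).ncard = #(outNbrsIn ω v (univ.erase v)) := by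
  rw [← Set.ncard_coe_finset]
  congr 1
  ext w
  simp only [tN1, Set.mem_ofPred_eq, mem_coe, mem_outNbrsIn, mem_erase, mem_univ]
  exact ⟨fun h => ⟨⟨h.1.symm, trivial⟩, h⟩, fun h => h.2⟩

lemma card_outNbrsIn_insert (ω : TOmega n) (u : Fin n) {y : Fin n} {T : Finset (Fin n)}
    (hy : y ∉ T) :
    (#(outNbrsIn ω u (insert y T)) : ℝ) = #(outNbrsIn ω u T) + ind (tadj ω u y) := by
  by_cases h : tadj ω u y
  · have : outNbrsIn ω u (insert y T) = insert y (outNbrsIn ω u T) := by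
      ext x; simp only [mem_outNbrsIn, mem_insert]; grind
    rw [this, card_insert_of_notMem fun hm => hy (mem_outNbrsIn.1 hm).1, ind_of h]
    push_cast; ring
  · have : outNbrsIn ω u (insert y T) = outNbrsIn ω u T := by
      ext x; simp only [mem_outNbrsIn, mem_insert]; grind
    rw [this, ind_of_not h, add_zero]

lemma ncard_tN1_eq_add {ω : TOmega n} {u v : Fin n} (huv : u ≠ v) :
    ((tN1 ω u).ncard : ℝ) = #(outNbrsIn ω u ((univ.erase u).erase v)) + ind (tadj ω u v) := by
  rw [ncard_tN1, ← card_outNbrsIn_insert ω u (notMem_erase v _),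
    insert_erase (mem_erase.2 ⟨huv.symm, mem_univ v⟩)]

lemma tEx_ind_ncard_tN1_le (v : Fin n) (x : ℝ) :
    tEx (fun ω => ind (((tN1 ω v).ncard : ℝ) ≤ x)) = binHalfCdf (n - 1) x := by
  simp_rw [ncard_tN1]
  rw [tEx_ind_card_outNbrsIn_le (notMem_erase v univ), card_erase_of_mem (mem_univ v),
    card_univ, Fintype.card_fin]

theorem tEx_ind_ncard_tN1_le_mul {u v : Fin n} (huv : u ≠ v) (x : ℝ) :
    tEx (fun ω => ind (((tN1 ω u).ncard : ℝ) ≤ x) * ind (((tN1 ω v).ncard : ℝ) ≤ x))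
      = binHalfCdf (n - 2) (x - 1) * binHalfCdf (n - 2) x := by
  set T := (univ.erase u).erase v with hT
  have hT' : (univ.erase v).erase u = T := erase_right_comm
  have hcard : #T = n - 2 := by
    rw [hT, card_erase_of_mem (mem_erase.2 ⟨huv.symm, mem_univ v⟩),
      card_erase_of_mem (mem_univ u), card_univ, Fintype.card_fin, Nat.sub_sub]
  have hu : u ∉ T := fun h => (mem_erase.1 (mem_erase.1 h).2).1 rfl
  have hv : v ∉ T := fun h => (mem_erase.1 h).1 rfl
  have hpt : ∀ ω, ind (((tN1 ω u).ncard : ℝ) ≤ x) * ind (((tN1 ω v).ncard : ℝ) ≤ x)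
      = ind (tadj ω u v) * (ind ((#(outNbrsIn ω u T) : ℝ) ≤ x - 1)
          * ind ((#(outNbrsIn ω v T) : ℝ) ≤ x))
        + ind (tadj ω v u) * (ind ((#(outNbrsIn ω v T) : ℝ) ≤ x - 1)
          * ind ((#(outNbrsIn ω u T) : ℝ) ≤ x)) := by
    intro ω
    rw [ncard_tN1_eq_add huv, ncard_tN1_eq_add huv.symm, hT', ← hT]
    by_cases h : tadj ω u v
    · rw [ind_of h, ind_of_not ((tadj_comm_iff_not huv).not_left.2 h)]
      simp only [le_sub_iff_add_le, add_zero, one_mul, zero_mul]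
    · rw [ind_of_not h, ind_of ((tadj_comm_iff_not huv).2 h)]
      simp only [le_sub_iff_add_le, add_zero, one_mul, zero_mul, zero_add, mul_comm]
  rw [tEx_congr hpt, tEx_add, tEx_ind_tadj_mul_outNbrsIn huv hu hv,
    tEx_ind_tadj_mul_outNbrsIn huv.symm hv hu, hcard]
  ring

lemma tN2_subset_compl (ω : TOmega n) (v : Fin n) : tN2 ω v ⊆ (insert v (tN1 ω v))ᶜ :=
  fun w hw => by simp [tN1, hw.1, hw.2.1]

lemma ncard_compl_insert_tN1 (ω : TOmega n) (v : Fin n) :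
    ((insert v (tN1 ω v))ᶜ).ncard + (tN1 ω v).ncard + 1 = n := by
  have h := Set.ncard_add_ncard_compl (insert v (tN1 ω v))
  rw [Set.ncard_insert_of_notMem (fun hv => hv.1 rfl), Nat.card_eq_fintype_card,
    Fintype.card_fin] at h
  omega

lemma compl_insert_tN1_subset_tN2 {ω : TOmega n} {v : Fin n}
    (h : ∀ w ≠ v, ∃ x, tadj ω v x ∧ ¬tadj ω w x) :
    (insert v (tN1 ω v))ᶜ ⊆ tN2 ω v := by
  intro w hw
  simp only [Set.mem_compl_iff, Set.mem_insert_iff, not_or, tN1, Set.mem_ofPred_eq] at hw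
  obtain ⟨x, hvx, hwx⟩ := h w hw.1
  have hxw : w ≠ x := by rintro rfl; exact hw.2 hvx
  exact ⟨hw.1, hw.2, x, hvx, (tadj_comm_iff_not hxw).2 hwx⟩

lemma ncard_tN1_le_of_tSeymour (hn : n = 2 * m + 2) {ω : TOmega n} {v : Fin n}
    (h : tSeymour ω v) : (tN1 ω v).ncard ≤ m := by
  have hN2 := Set.ncard_le_ncard (tN2_subset_compl ω v)
  have := ncard_compl_insert_tN1 ω v
  unfold tSeymour at h
  omega

lemma exists_dominator_of_not_tSeymour (hn : n = 2 * m + 2) {ω : TOmega n} {v : Fin n}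
    (hdeg : (tN1 ω v).ncard ≤ m) (h : ¬tSeymour ω v) :
    ∃ w ≠ v, ∀ x, tadj ω v x → tadj ω w x := by
  by_contra hdom
  push Not at hdom
  have hN2 := Set.ncard_le_ncard (compl_insert_tN1_subset_tN2 hdom)
  have := ncard_compl_insert_tN1 ω v
  unfold tSeymour at h
  omega

lemma tEx_ind_imp_tadj {v w x : Fin n} (hvw : v ≠ w) (hxv : x ≠ v) (hxw : x ≠ w) :
    tEx (fun ω => ind (tadj ω v x → tadj ω w x)) = 3 / 4 := by
  simp_rw [ind_imp]
  rw [tEx_sub, tEx_const, tEx_mul_of_disjoint ((dependsOnEdges_tadj v x).comp ind)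
      ((dependsOnEdges_tadj w x).comp fun P => ind (¬P)),
    tEx_ind_tadj hxv.symm, tEx_ind_not_tadj hxw.symm]
  · norm_num
  · rw [Set.disjoint_singleton, ne_eq, Sym2.eq_iff]
    rintro (⟨h, -⟩ | ⟨h, -⟩)
    exacts [hvw h, hxv h.symm]

lemma tEx_ind_dominates_le (v w : Fin n) :
    tEx (fun ω => ind (w ≠ v ∧ ∀ x, tadj ω v x → tadj ω w x)) ≤ (3 / 4) ^ (n - 2) := by
  by_cases hwv : w = v
  · rw [tEx_congr fun ω => ind_of_not fun h => h.1 hwv, tEx_const]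
    positivity
  set T := (univ.erase v).erase w with hT
  have hmemT : ∀ {x}, x ∈ T ↔ x ≠ w ∧ x ≠ v := by simp [hT]
  have hcard : #T = n - 2 := by
    rw [hT, card_erase_of_mem (mem_erase.2 ⟨hwv, mem_univ w⟩), card_erase_of_mem (mem_univ v),
      card_univ, Fintype.card_fin, Nat.sub_sub]
  calc tEx (fun ω => ind (w ≠ v ∧ ∀ x, tadj ω v x → tadj ω w x))
      ≤ tEx (fun ω => ∏ x ∈ T, ind (tadj ω v x → tadj ω w x)) :=
        tEx_mono fun ω => by rw [← ind_forall_mem]; exact ind_mono fun h x _ => h.2 x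
    _ = ∏ x ∈ T, tEx (fun ω => ind (tadj ω v x → tadj ω w x)) :=
        tEx_prod_of_pairwiseDisjoint T (E := fun x => {s(v, x), s(w, x)})
          (fun x _ ω ω' h => by rw [h v x (by simp), h w x (by simp)])
          (fun x hx y hy hxy => by
            rw [mem_coe, hmemT] at hx hy
            simp only [Function.onFun, Set.disjoint_insert_left, Set.disjoint_insert_right,
              Set.disjoint_singleton, Set.mem_insert_iff, Set.mem_singleton_iff, Sym2.eq_iff]
            grind)
    _ = (3 / 4) ^ (n - 2) := by
        rw [prod_congr rfl fun x hx => tEx_ind_imp_tadj (Ne.symm hwv) (hmemT.1 hx).2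
          (hmemT.1 hx).1, prod_const, hcard]

noncomputable def tVar (X : TOmega n → ℝ) : ℝ := tEx fun ω => (X ω - tEx X) ^ 2

lemma tVar_eq_sub (X : TOmega n → ℝ) : tVar X = tEx (fun ω => X ω ^ 2) - tEx X ^ 2 := by
  have h : ∀ ω, (X ω - tEx X) ^ 2 = X ω ^ 2 + -(2 * tEx X) * X ω + tEx X ^ 2 :=
    fun ω => by ring
  rw [tVar, tEx_congr h, tEx_add, tEx_add, tEx_const_mul, tEx_const]
  ring

lemma tVar_sum {ι : Type*} (s : Finset ι) (X : ι → TOmega n → ℝ) :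
    tVar (fun ω => ∑ i ∈ s, X i ω)
      = ∑ i ∈ s, ∑ j ∈ s, (tEx (fun ω => X i ω * X j ω) - tEx (X i) * tEx (X j)) := by
  simp_rw [tVar_eq_sub, sq, sum_mul_sum, tEx_sum, sum_sub_distrib]
  rw [sum_mul_sum]

lemma abs_tVar_sub_tVar_le {X Y : TOmega n → ℝ} {c : ℝ} (hX : ∀ ω, 0 ≤ X ω)
    (hXY : ∀ ω, X ω ≤ Y ω) (hY : ∀ ω, Y ω ≤ c) :
    |tVar X - tVar Y| ≤ 2 * c * (tEx Y - tEx X) := by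
  have hsq : tEx (fun ω => X ω ^ 2) ≤ tEx (fun ω => Y ω ^ 2) :=
    tEx_mono fun ω => pow_le_pow_left₀ (hX ω) (hXY ω) 2
  have hsq' : tEx (fun ω => Y ω ^ 2) ≤ tEx (fun ω => X ω ^ 2 + 2 * c * (Y ω - X ω)) :=
    tEx_mono fun ω => by nlinarith [hX ω, hXY ω, hY ω]
  rw [tEx_add, tEx_const_mul, tEx_sub] at hsq'
  have h0 : 0 ≤ tEx X := by simpa [tEx_const] using tEx_mono (f := fun _ => 0) hX
  have h1 : tEx X ≤ tEx Y := tEx_mono hXY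
  have h2 : tEx Y ≤ c := by simpa [tEx_const] using tEx_mono hY
  rw [tVar_eq_sub, tVar_eq_sub, abs_le]
  constructor <;> nlinarith

lemma tS_eq_sum_ind (ω : TOmega n) : (tS ω : ℝ) = ∑ v, ind (tSeymour ω v) := by
  classical
  rw [tS, Set.ncard_eq_toFinset_card', Set.toFinset_ofPred, card_filter]
  push_cast
  exact sum_congr rfl fun v _ => by by_cases h : tSeymour ω v <;> simp [h, ind_of, ind_of_not]

noncomputable def lowDegCount (m : ℕ) (ω : TOmega n) : ℝ :=
  ∑ v, ind (((tN1 ω v).ncard : ℝ) ≤ m)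

lemma tS_le_lowDegCount (hn : n = 2 * m + 2) (ω : TOmega n) :
    (tS ω : ℝ) ≤ lowDegCount m ω := by
  rw [tS_eq_sum_ind]
  exact sum_le_sum fun v _ => ind_mono fun h => by exact_mod_cast ncard_tN1_le_of_tSeymour hn h

lemma lowDegCount_le (ω : TOmega n) : lowDegCount m ω ≤ n :=
  calc lowDegCount m ω ≤ ∑ _v : Fin n, (1 : ℝ) := sum_le_sum fun _ _ => ind_le_one _
    _ = n := by simp

lemma lowDegCount_sub_tS_le (hn : n = 2 * m + 2) (ω : TOmega n) :
    lowDegCount m ω - tS ω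
      ≤ ∑ v, ∑ w, ind (w ≠ v ∧ ∀ x, tadj ω v x → tadj ω w x) := by
  rw [lowDegCount, tS_eq_sum_ind, ← sum_sub_distrib]
  refine sum_le_sum fun v _ => ?_
  have hnonneg : 0 ≤ ∑ w, ind (w ≠ v ∧ ∀ x, tadj ω v x → tadj ω w x) :=
    sum_nonneg fun w _ => ind_nonneg _
  by_cases hS : tSeymour ω v
  · linarith [ind_le_one (((tN1 ω v).ncard : ℝ) ≤ m), ind_of hS]
  by_cases hdeg : (tN1 ω v).ncard ≤ m
  · obtain ⟨w, hw⟩ := exists_dominator_of_not_tSeymour hn hdeg hS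
    have := single_le_sum (fun w _ => ind_nonneg (w ≠ v ∧ ∀ x, tadj ω v x → tadj ω w x))
      (mem_univ w)
    linarith [ind_le_one (((tN1 ω v).ncard : ℝ) ≤ m), ind_of hw, ind_of_not hS]
  · rw [ind_of_not (by exact_mod_cast hdeg), ind_of_not hS]
    linarith

lemma tEx_lowDegCount_sub_tEx_tS_le (hn : n = 2 * m + 2) :
    tEx (lowDegCount m : TOmega n → ℝ) - tEx (fun ω : TOmega n => (tS ω : ℝ))
      ≤ n ^ 2 * (3 / 4) ^ (n - 2) := by
  rw [← tEx_sub]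
  refine (tEx_mono (lowDegCount_sub_tS_le hn)).trans ?_
  simp_rw [tEx_sum]
  calc ∑ v, ∑ w, tEx (fun ω => ind (w ≠ v ∧ ∀ x, tadj ω v x → tadj ω w x))
      ≤ ∑ _v : Fin n, ∑ _w : Fin n, ((3 : ℝ) / 4) ^ (n - 2) :=
        sum_le_sum fun v _ => sum_le_sum fun w _ => tEx_ind_dominates_le v w
    _ = n ^ 2 * (3 / 4) ^ (n - 2) := by simp [sq, mul_assoc]

lemma tVar_lowDegCount (hn : n = 2 * m + 2) :
    tVar (lowDegCount m : TOmega n → ℝ) = n / 4 * (1 - (Real.Wallis.W m)⁻¹) := by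
  set c : ℝ := (2 * m).choose m / 4 ^ m with hc
  have hmean : ∀ v : Fin n, tEx (fun ω => ind (((tN1 ω v).ncard : ℝ) ≤ m)) = 1 / 2 := by
    intro v
    rw [tEx_ind_ncard_tN1_le, show n - 1 = 2 * m + 1 by omega, binHalfCdf_two_mul_add_one]
  have hcov : ∀ u v : Fin n,
      tEx (fun ω => ind (((tN1 ω u).ncard : ℝ) ≤ m) * ind (((tN1 ω v).ncard : ℝ) ≤ m))
        - tEx (fun ω => ind (((tN1 ω u).ncard : ℝ) ≤ m))
          * tEx (fun ω => ind (((tN1 ω v).ncard : ℝ) ≤ m))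
      = if u = v then 1 / 4 else -c ^ 2 / 4 := by
    intro u v
    split_ifs with huv
    · subst huv
      simp_rw [← ind_and, and_self, hmean]
      norm_num
    · rw [tEx_ind_ncard_tN1_le_mul huv, hmean, hmean, show n - 2 = 2 * m by omega,
        binHalfCdf_two_mul_sub_one_mul, ← hc]
      ring
  have hrow : ∀ u : Fin n, ∑ v, (if u = v then 1 / 4 else -c ^ 2 / 4)
      = 1 / 4 + (n - 1) * (-c ^ 2 / 4) := by
    intro u
    rw [← add_sum_erase _ _ (mem_univ u), if_pos rfl,
      sum_congr rfl fun v hv => if_neg (ne_of_mem_erase hv).symm, sum_const,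
      card_erase_of_mem (mem_univ _), card_univ, Fintype.card_fin, nsmul_eq_mul,
      Nat.cast_pred (by omega)]
  unfold lowDegCount
  simp_rw [tVar_sum, hcov, hrow, sum_const, card_univ, Fintype.card_fin, nsmul_eq_mul]
  rw [Real.Wallis.inv_W_eq, ← hc, hn]
  push_cast
  ring

theorem abs_tVarS_div_sub_le (hn : n = 2 * m + 2) :
    |tVarS n / n - (1 - (Real.Wallis.W m)⁻¹) / 4| ≤ 2 * (n ^ 2 * (3 / 4) ^ (n - 2)) := by
  have hn0 : (0 : ℝ) < n := by rw [hn]; positivity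
  have hvar : |tVarS n - tVar (lowDegCount m : TOmega n → ℝ)|
      ≤ 2 * n * (n ^ 2 * (3 / 4) ^ (n - 2)) :=
    (abs_tVar_sub_tVar_le (fun ω => Nat.cast_nonneg _) (tS_le_lowDegCount hn)
      lowDegCount_le).trans
      (mul_le_mul_of_nonneg_left (tEx_lowDegCount_sub_tEx_tS_le hn) (by positivity))
  rw [tVar_lowDegCount hn] at hvar
  rw [show tVarS n / n - (1 - (Real.Wallis.W m)⁻¹) / 4
      = (tVarS n - n / 4 * (1 - (Real.Wallis.W m)⁻¹)) / n by field_simp,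
    abs_div, abs_of_pos hn0, div_le_iff₀ hn0]
  linarith

lemma tendsto_sq_mul_pow_sub_two :
    Tendsto (fun n : ℕ => (n : ℝ) ^ 2 * (3 / 4) ^ (n - 2)) atTop (𝓝 0) := by
  have h := (tendsto_pow_const_mul_const_pow_of_abs_lt_one 2
    (by norm_num : |(3 / 4 : ℝ)| < 1)).const_mul (16 / 9)
  rw [mul_zero] at h
  refine h.congr' ?_
  filter_upwards [eventually_ge_atTop 2] with n hn
  rw [pow_sub₀ _ (by norm_num) hn]
  ring

end Tournament

/-- Along even values of `n`, the variance of the number of Seymour vertices of the random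
tournament on `n` vertices satisfies `Var(S_n)/n → 1/4 − 1/(2π)` as `n → ∞`. -/
theorem variance_seymour_asymptotic_even :
    Filter.Tendsto (fun k : ℕ => tVarS (2 * k) / ((2 * k : ℕ) : ℝ)) Filter.atTop
      (nhds (1 / 4 - 1 / (2 * Real.pi))) := by
  rw [← tendsto_add_atTop_iff_nat 1]
  have hW : Tendsto (fun m => (1 - (Real.Wallis.W m)⁻¹) / 4) atTop
      (𝓝 (1 / 4 - 1 / (2 * Real.pi))) := by
    convert ((Real.Wallis.tendsto_W_nhds_pi_div_two.inv₀ (by positivity)).const_sub 1).div_const 4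
      using 2
    field_simp
    ring
  have hn : Tendsto (fun m : ℕ => 2 * (m + 1)) atTop atTop :=
    tendsto_id.const_mul_atTop' two_pos |>.comp (tendsto_add_atTop_nat 1)
  have herr : Tendsto (fun m => tVarS (2 * (m + 1)) / ((2 * (m + 1) : ℕ) : ℝ)
      - (1 - (Real.Wallis.W m)⁻¹) / 4) atTop (𝓝 0) := by
    refine squeeze_zero_norm (fun m => Tournament.abs_tVarS_div_sub_le (by ring)) ?_
    simpa using (Tournament.tendsto_sq_mul_pow_sub_two.comp hn).const_mul 2
  simpa using hW.add herr
end

section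
/- Let S_n be the number of Seymour vertices of the random tournament T_n on n vertices. There exists a constant K > 0 such that for every A > 0 and every n ≥ 2, P(|S_n − E(S_n)| ≥ A·√(n log n)) ≤ K/(A² log n). In particular, for each fixed A > 0, P(|S_n − E(S_n)| ≥ A·√(n log n)) → 0 as n → ∞. -/
/-! Let `J v` indicate that `v` has out-degree at most `(n - 1) / 2`. Since `N₁(v)` and `N₂(v)`
are disjoint sets of other vertices, every Seymour vertex has `J v = 1`; if moreover `v` is a king
(every other vertex is at distance at most two), they partition the other vertices, so a king with
`J v = 1` is a Seymour vertex. Hence `S_n = X - D` with `X = ∑ J v`, where `D` lies between `0` and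
the number `B` of non-kings, and `B ≤ n`.

Conditioning on the orientation of the edge `vw`, `J v` and `J w` become antitone functions of
independent degree counts, exactly one of which receives the edge; so they are non-positively
correlated and `Var X ≤ n`. A vertex `v` is not a king only if some `w` has no path `v → x → w`,
which happens with probability at most `n (3/4)^(n-2)`; so `E D² ≤ n E B = O(n)`. Thus
`Var S_n = O(n)`, and Chebyshev's inequality gives the bound. -/

open Finset Function
open scoped BigOperators

section UniformExpectation

variable {Ω : Type*} [Fintype Ω]

lemma expect_sq_sub_expect [Nonempty Ω] (f : Ω → ℝ) :
    𝔼 ω, (f ω - 𝔼 ω, f ω) ^ 2 = 𝔼 ω, f ω ^ 2 - (𝔼 ω, f ω) ^ 2 := by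
  have h : ∀ ω, (f ω - 𝔼 ω, f ω) ^ 2 = f ω ^ 2 - 2 * (𝔼 ω, f ω) * f ω + (𝔼 ω, f ω) ^ 2 :=
    fun ω => by ring
  simp only [h, expect_add_distrib, expect_sub_distrib, ← mul_expect, Fintype.expect_const]
  ring

lemma expect_sq_sub_expect_le_expect_sq [Nonempty Ω] (f : Ω → ℝ) :
    𝔼 ω, (f ω - 𝔼 ω, f ω) ^ 2 ≤ 𝔼 ω, f ω ^ 2 := by
  rw [expect_sq_sub_expect]
  nlinarith [sq_nonneg (𝔼 ω, f ω)]

lemma expect_sq_sub_expect_sub_le (f g : Ω → ℝ) :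
    𝔼 ω, (f ω - g ω - 𝔼 ω, (f ω - g ω)) ^ 2
      ≤ 2 * 𝔼 ω, (f ω - 𝔼 ω, f ω) ^ 2 + 2 * 𝔼 ω, (g ω - 𝔼 ω, g ω) ^ 2 := by
  rw [mul_expect, mul_expect, ← expect_add_distrib]
  refine expect_le_expect fun ω _ => ?_
  rw [expect_sub_distrib]
  nlinarith [sq_nonneg (f ω - 𝔼 ω, f ω + (g ω - 𝔼 ω, g ω))]

lemma expect_sq_sub_expect_sum_le_card [Nonempty Ω] {ι : Type*} [Fintype ι] [DecidableEq ι]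
    (f : ι → Ω → ℝ) (hf : ∀ i ω, |f i ω| ≤ 1)
    (hcov : ∀ i j, i ≠ j → 𝔼 ω, f i ω * f j ω ≤ (𝔼 ω, f i ω) * 𝔼 ω, f j ω) :
    𝔼 ω, (∑ i, f i ω - 𝔼 ω, ∑ i, f i ω) ^ 2 ≤ Fintype.card ι := by
  have hdiag : ∀ i, 𝔼 ω, f i ω * f i ω - (𝔼 ω, f i ω) * 𝔼 ω, f i ω ≤ 1 := fun i => by
    have : 𝔼 ω, f i ω * f i ω ≤ 1 := expect_le univ_nonempty fun ω _ => by
      nlinarith [abs_le.1 (hf i ω)]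
    nlinarith [mul_self_nonneg (𝔼 ω, f i ω)]
  have hrow : ∀ i, ∑ j, (𝔼 ω, f i ω * f j ω - (𝔼 ω, f i ω) * 𝔼 ω, f j ω) ≤ 1 := fun i => by
    rw [← add_sum_erase _ _ (mem_univ i)]
    have := sum_nonpos fun j (hj : j ∈ univ.erase i) =>
      sub_nonpos.2 (hcov i j (ne_of_mem_erase hj).symm)
    linarith [hdiag i]
  have hsq : 𝔼 ω, (∑ i, f i ω) ^ 2 = ∑ i, ∑ j, 𝔼 ω, f i ω * f j ω := by
    simp_rw [sq, sum_mul_sum, expect_sum_comm]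
  have hsq' : (𝔼 ω, ∑ i, f i ω) ^ 2 = ∑ i, ∑ j, (𝔼 ω, f i ω) * 𝔼 ω, f j ω := by
    rw [expect_sum_comm, sq, sum_mul_sum]
  calc 𝔼 ω, (∑ i, f i ω - 𝔼 ω, ∑ i, f i ω) ^ 2
      = ∑ i, ∑ j, (𝔼 ω, f i ω * f j ω - (𝔼 ω, f i ω) * 𝔼 ω, f j ω) := by
        simp only [expect_sq_sub_expect, hsq, hsq', ← sum_sub_distrib]
    _ ≤ ∑ _i : ι, (1 : ℝ) := sum_le_sum fun i _ => hrow i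
    _ = Fintype.card ι := by simp

lemma expect_indicator_le_expect_sq_div (g : Ω → ℝ) {t : ℝ} (ht : 0 < t) :
    𝔼 ω, {ω | t ≤ |g ω|}.indicator 1 ω ≤ (𝔼 ω, g ω ^ 2) / t ^ 2 := by
  rw [expect_div]
  refine expect_le_expect fun ω _ => ?_
  simp only [Set.indicator_apply, Set.mem_ofPred_eq, Pi.one_apply]
  split_ifs with h
  · rw [one_le_div (by positivity), ← sq_abs (g ω)]
    gcongr
  · positivity

end UniformExpectation

section Independence

variable {ι β : Type*}

lemma DependsOn.mul {f g : (ι → β) → ℝ} {s t : Set ι} (hf : DependsOn f s)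
    (hg : DependsOn g t) : DependsOn (fun x => f x * g x) (s ∪ t) := fun x y h => by
  simp only [hf fun i hi => h i (Or.inl hi), hg fun i hi => h i (Or.inr hi)]

lemma DependsOn.finset_prod {κ : Type*} (F : Finset κ) {f : κ → (ι → β) → ℝ}
    {s : κ → Set ι} (hf : ∀ k ∈ F, DependsOn (f k) (s k)) :
    DependsOn (fun x => ∏ k ∈ F, f k x) (⋃ k ∈ F, s k) := fun _ _ h =>
  prod_congr rfl fun k hk => hf k hk fun i hi => h i (Set.mem_biUnion hk hi)

variable [Fintype ι] [DecidableEq ι] [Fintype β] [Nonempty β]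

lemma expect_mul_of_dependsOn {f g : (ι → β) → ℝ} {s t : Set ι} (hf : DependsOn f s)
    (hg : DependsOn g t) (hst : Disjoint s t) :
    𝔼 x, f x * g x = (𝔼 x, f x) * 𝔼 x, g x := by
  classical
  -- split the coordinates into those in `s`, the only ones `f` reads, and the rest, which
  -- contain all those `g` reads
  let e := Equiv.piEquivPiSubtypeProd (· ∈ s) fun _ => β
  have he : ∀ F : (ι → β) → ℝ, 𝔼 x, F x = 𝔼 a, 𝔼 b, F (e.symm (a, b)) := fun F => by
    rw [← expect_product', univ_product_univ]
    exact Fintype.expect_equiv e _ _ fun x => by simp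
  obtain ⟨a₀⟩ : Nonempty ((i : {i // i ∈ s}) → β) := inferInstance
  obtain ⟨b₀⟩ : Nonempty ((i : {i // i ∉ s}) → β) := inferInstance
  have hfe : ∀ a b, f (e.symm (a, b)) = f (e.symm (a, b₀)) := fun a b =>
    hf fun i hi => by simp [e, Equiv.piEquivPiSubtypeProd, hi]
  have hge : ∀ a b, g (e.symm (a, b)) = g (e.symm (a₀, b)) := fun a b =>
    hg fun i hi => by simp [e, Equiv.piEquivPiSubtypeProd, hst.notMem_of_mem_right hi]
  calc 𝔼 x, f x * g x = 𝔼 a, 𝔼 b, f (e.symm (a, b₀)) * g (e.symm (a₀, b)) := by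
        rw [he]
        exact expect_congr rfl fun a _ => expect_congr rfl fun b _ => by rw [hfe, hge]
    _ = (𝔼 a, f (e.symm (a, b₀))) * 𝔼 b, g (e.symm (a₀, b)) :=
        (Fintype.expect_mul_expect _ _).symm
    _ = (𝔼 x, f x) * 𝔼 x, g x := by simp only [he f, he g, hfe, hge, Fintype.expect_const]

lemma expect_prod_of_dependsOn {κ : Type*} (F : Finset κ) {f : κ → (ι → β) → ℝ}
    {s : κ → Set ι} (hf : ∀ k ∈ F, DependsOn (f k) (s k))
    (hs : (F : Set κ).PairwiseDisjoint s) :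
    𝔼 x, ∏ k ∈ F, f k x = ∏ k ∈ F, 𝔼 x, f k x := by
  classical
  induction F using Finset.cons_induction with
  | empty => simp
  | cons k F hk ih =>
    simp only [prod_cons]
    rw [expect_mul_of_dependsOn (hf k (mem_cons_self k F))
      (DependsOn.finset_prod F fun j hj => hf j (mem_cons_of_mem hj)), ih]
    · exact fun j hj => hf j (mem_cons_of_mem hj)
    · exact hs.subset (by simp)
    · refine Set.disjoint_iUnion₂_right.2 fun j hj => hs (by simp) (by simp [hj]) ?_
      rintro rfl
      exact hk hj

lemma expect_ite_apply_eq [DecidableEq β] (i : ι) (b : β) :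
    𝔼 x : ι → β, (if x i = b then (1 : ℝ) else 0) = (Fintype.card β : ℝ)⁻¹ := by
  let g : β → ({j // j ≠ i} → β) → ℝ := fun c _ => if c = b then 1 else 0
  rw [Fintype.expect_equiv (Equiv.funSplitAt i β) (fun x => if x i = b then (1 : ℝ) else 0)
    (fun p => g p.1 p.2) fun x => rfl, ← univ_product_univ, expect_product']
  simp [g]

end Independence

section Tournament

variable {n : ℕ} {ω : TOmega n} {v w : Fin n}

instance inst_s11 (ω : TOmega n) (v w : Fin n) : Decidable (tadj ω v w) := by
  unfold tadj; infer_instance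

lemma tadj.ne (h : tadj ω v w) : v ≠ w := h.1

lemma tadj_asymm (h : tadj ω v w) : ¬ tadj ω w v := by
  rintro ⟨-, h'⟩
  obtain ⟨hvw, h⟩ := h
  rcases hvw.lt_or_gt with hlt | hlt <;> simp_all [hlt.not_gt]

lemma tadj_or_tadj (hvw : v ≠ w) : tadj ω v w ∨ tadj ω w v := by
  rcases hvw.lt_or_gt with hlt | hlt <;> cases h : ω v w <;> cases h' : ω w v <;>
    simp_all [tadj, hlt.not_gt, hvw.symm]

lemma tadj_congr {ω' : TOmega n} (h₁ : ω v w = ω' v w) (h₂ : ω w v = ω' w v) :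
    tadj ω v w ↔ tadj ω' v w := by
  simp only [tadj, h₁, h₂]

end Tournament

section Kings

variable {n : ℕ} {ω : TOmega n} {v : Fin n}

def tKing (ω : TOmega n) (v : Fin n) : Prop :=
  ∀ w, w ≠ v → tadj ω v w ∨ ∃ x, tadj ω v x ∧ tadj ω x w

instance (ω : TOmega n) (v : Fin n) : Decidable (tKing ω v) := by
  unfold tKing; infer_instance

noncomputable instance (ω : TOmega n) (v : Fin n) : Decidable (tSeymour ω v) := by
  unfold tSeymour; infer_instance

lemma tN1_union_tN2_subset : tN1 ω v ∪ tN2 ω v ⊆ {v}ᶜ := by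
  rintro w (hw | hw)
  · exact fun h => hw.ne (Set.mem_singleton_iff.1 h).symm
  · exact hw.1

lemma ncard_tN1_add_ncard_tN2 :
    (tN1 ω v).ncard + (tN2 ω v).ncard = (tN1 ω v ∪ tN2 ω v).ncard :=
  (Set.ncard_union_eq (Set.disjoint_left.2 fun _ h₁ h₂ => h₂.2.1 h₁)).symm

lemma ncard_compl_singleton (v : Fin n) : ({v}ᶜ : Set (Fin n)).ncard = n - 1 := by
  rw [Set.ncard_compl, Set.ncard_singleton, Nat.card_eq_fintype_card, Fintype.card_fin]

lemma tSeymour.two_mul_ncard_tN1_le (h : tSeymour ω v) : 2 * (tN1 ω v).ncard ≤ n - 1 := by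
  have := Set.ncard_le_ncard (tN1_union_tN2_subset (ω := ω) (v := v))
  rw [← ncard_tN1_add_ncard_tN2, ncard_compl_singleton] at this
  unfold tSeymour at h
  omega

lemma tSeymour_of_tKing (hk : tKing ω v) (hd : 2 * (tN1 ω v).ncard ≤ n - 1) :
    tSeymour ω v := by
  have hunion : tN1 ω v ∪ tN2 ω v = {v}ᶜ := by
    refine tN1_union_tN2_subset.antisymm fun w hw => ?_
    by_cases h : tadj ω v w
    · exact Or.inl h
    · exact Or.inr ⟨hw, h, (hk w hw).resolve_left h⟩
  have := ncard_tN1_add_ncard_tN2 (ω := ω) (v := v)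
  rw [hunion, ncard_compl_singleton] at this
  unfold tSeymour
  omega

end Kings

section RandomTournament

variable {n : ℕ} {v w : Fin n}

lemma tEx_eq_expect (f : TOmega n → ℝ) : tEx f = 𝔼 ω, f ω :=
  (Fintype.expect_eq_sum_div_card f).symm

lemma tPr_eq_expect (E : Set (TOmega n)) : tPr E = 𝔼 ω, E.indicator 1 ω :=
  (Fintype.expect_eq_sum_div_card _).symm

def EdgeDependsOn (f : TOmega n → ℝ) (s : Set (Fin n × Fin n)) : Prop :=
  DependsOn (fun x => f (curry x)) s

lemma expect_eq_expect_curry (f : TOmega n → ℝ) :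
    𝔼 ω, f ω = 𝔼 x : Fin n × Fin n → Bool, f (curry x) :=
  Fintype.expect_equiv (Equiv.curry _ _ _).symm _ _ fun _ => rfl

lemma expect_mul_of_edgeDependsOn {f g : TOmega n → ℝ} {s t : Set (Fin n × Fin n)}
    (hf : EdgeDependsOn f s) (hg : EdgeDependsOn g t) (hst : Disjoint s t) :
    𝔼 ω, f ω * g ω = (𝔼 ω, f ω) * 𝔼 ω, g ω := by
  simp only [expect_eq_expect_curry]
  exact expect_mul_of_dependsOn hf hg hst

lemma expect_prod_of_edgeDependsOn {κ : Type*} (F : Finset κ) {f : κ → TOmega n → ℝ}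
    {s : κ → Set (Fin n × Fin n)} (hf : ∀ k ∈ F, EdgeDependsOn (f k) (s k))
    (hs : (F : Set κ).PairwiseDisjoint s) :
    𝔼 ω, ∏ k ∈ F, f k ω = ∏ k ∈ F, 𝔼 ω, f k ω := by
  simp only [expect_eq_expect_curry]
  exact expect_prod_of_dependsOn F hf hs

lemma edgeDependsOn_ite_tadj (v w : Fin n) :
    EdgeDependsOn (fun ω => if tadj ω v w then (1 : ℝ) else 0) {(v, w), (w, v)} :=
  fun x y h => by
    simp only [tadj_congr (ω := curry x) (ω' := curry y) (h (v, w) (by simp)) (h (w, v) (by simp))]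

lemma expect_ite_tadj (hvw : v ≠ w) :
    𝔼 ω : TOmega n, (if tadj ω v w then (1 : ℝ) else 0) = 1 / 2 := by
  rw [expect_eq_expect_curry]
  rcases hvw.lt_or_gt with hlt | hlt
  · have h : ∀ x : Fin n × Fin n → Bool, tadj (curry x) v w ↔ x (v, w) = true := fun x => by
      simp [tadj, hvw, hlt]
    simp only [h, expect_ite_apply_eq, Fintype.card_bool]
    norm_num
  · have h : ∀ x : Fin n × Fin n → Bool, tadj (curry x) v w ↔ x (w, v) = false := fun x => by
      simp [tadj, hvw, hlt.not_gt]
    simp only [h, expect_ite_apply_eq, Fintype.card_bool]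
    norm_num

lemma expect_ite_tadj_mul (hvw : v ≠ w) {Y : TOmega n → ℝ} {s : Set (Fin n × Fin n)}
    (hY : EdgeDependsOn Y s) (hvws : (v, w) ∉ s) (hwvs : (w, v) ∉ s) :
    𝔼 ω, (if tadj ω v w then (1 : ℝ) else 0) * Y ω = (𝔼 ω, Y ω) / 2 := by
  rw [expect_mul_of_edgeDependsOn (edgeDependsOn_ite_tadj v w) hY (by simp [hvws, hwvs]),
    expect_ite_tadj hvw]
  ring

end RandomTournament

section LowDegree

variable {n : ℕ} {ω : TOmega n} {v w : Fin n}

def lowDegInd (n k : ℕ) : ℝ := if 2 * k ≤ n - 1 then 1 else 0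

lemma lowDegInd_antitone : Antitone (lowDegInd n) := fun a b hab => by
  unfold lowDegInd
  split_ifs <;> norm_num
  omega

lemma abs_lowDegInd_le_one (k : ℕ) : |lowDegInd n k| ≤ 1 := by
  unfold lowDegInd
  split_ifs <;> norm_num

lemma ite_tSeymour_le_lowDegInd (ω : TOmega n) (v : Fin n) :
    (if tSeymour ω v then 1 else 0) ≤ lowDegInd n (tN1 ω v).ncard := by
  unfold lowDegInd
  split_ifs with h h' <;> norm_num
  exact h' h.two_mul_ncard_tN1_le

lemma lowDegInd_le_ite_tSeymour_add (ω : TOmega n) (v : Fin n) :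
    lowDegInd n (tN1 ω v).ncard ≤ (if tSeymour ω v then 1 else 0) + if tKing ω v then 0 else 1 := by
  unfold lowDegInd
  split_ifs with hd hs <;> norm_num
  exact hs (tSeymour_of_tKing ‹_› hd)

def starAway (v w : Fin n) : Set (Fin n × Fin n) :=
  {p | (p.1 = v ∨ p.2 = v) ∧ p.1 ≠ w ∧ p.2 ≠ w}

lemma edgeDependsOn_ncard_tN1_sdiff (g : ℕ → ℝ) (hvw : v ≠ w) :
    EdgeDependsOn (fun ω => g (tN1 ω v \ {w}).ncard) (starAway v w) := fun x y h => by
  suffices tN1 (curry x) v \ {w} = tN1 (curry y) v \ {w} by simp only [this]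
  ext u
  simp only [tN1, Set.mem_sdiff, Set.mem_ofPred_eq, Set.mem_singleton_iff]
  by_cases huv : u = v
  · subst huv
    exact ⟨fun h => absurd rfl h.1.ne, fun h => absurd rfl h.1.ne⟩
  by_cases huw : u = w
  · simp [huw]
  rw [tadj_congr (ω := curry x) (ω' := curry y) (h (v, u) ⟨Or.inl rfl, hvw, huw⟩)
    (h (u, v) ⟨Or.inr rfl, huw, hvw⟩)]

lemma lowDegInd_ncard_tN1_eq (hvw : v ≠ w) :
    lowDegInd n (tN1 ω v).ncard
      = (if tadj ω v w then 1 else 0) * lowDegInd n ((tN1 ω v \ {w}).ncard + 1)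
        + (if tadj ω w v then 1 else 0) * lowDegInd n (tN1 ω v \ {w}).ncard := by
  by_cases h : tadj ω v w
  · rw [← Set.ncard_sdiff_singleton_add_one (a := w) h]
    simp [h, tadj_asymm h]
  · rw [Set.sdiff_singleton_eq_self (show w ∉ tN1 ω v from h)]
    simp [h, (tadj_or_tadj hvw).resolve_left h]

end LowDegree

section Covariance

variable {n : ℕ} {v w : Fin n}

lemma disjoint_starAway (v w : Fin n) : Disjoint (starAway v w) (starAway w v) :=
  Set.disjoint_left.2 fun p hp hq => by
    rcases hp.1 with h | h
    · exact hq.2.1 h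
    · exact hq.2.2 h

lemma expect_lowDegInd_mul_le (hvw : v ≠ w) :
    𝔼 ω, lowDegInd n (tN1 ω v).ncard * lowDegInd n (tN1 ω w).ncard
      ≤ (𝔼 ω, lowDegInd n (tN1 ω v).ncard) * 𝔼 ω, lowDegInd n (tN1 ω w).ncard := by
  set Φ : ℕ → TOmega n → ℝ := fun c ω => lowDegInd n ((tN1 ω v \ {w}).ncard + c)
  set Ψ : ℕ → TOmega n → ℝ := fun c ω => lowDegInd n ((tN1 ω w \ {v}).ncard + c)
  have hΦ : ∀ c, EdgeDependsOn (Φ c) (starAway v w) := fun c =>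
    edgeDependsOn_ncard_tN1_sdiff (fun k => lowDegInd n (k + c)) hvw
  have hΨ : ∀ c, EdgeDependsOn (Ψ c) (starAway w v) := fun c =>
    edgeDependsOn_ncard_tN1_sdiff (fun k => lowDegInd n (k + c)) hvw.symm
  have hΦΨ : ∀ c d, EdgeDependsOn (fun ω => Φ c ω * Ψ d ω) (starAway v w ∪ starAway w v) :=
    fun c d => (hΦ c).mul (hΨ d)
  have hv : ∀ ω, lowDegInd n (tN1 ω v).ncard
      = (if tadj ω v w then 1 else 0) * Φ 1 ω + (if tadj ω w v then 1 else 0) * Φ 0 ω :=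
    fun ω => lowDegInd_ncard_tN1_eq hvw
  have hw : ∀ ω, lowDegInd n (tN1 ω w).ncard
      = (if tadj ω w v then 1 else 0) * Ψ 1 ω + (if tadj ω v w then 1 else 0) * Ψ 0 ω :=
    fun ω => lowDegInd_ncard_tN1_eq hvw.symm
  have hvw' : ∀ ω, lowDegInd n (tN1 ω v).ncard * lowDegInd n (tN1 ω w).ncard
      = (if tadj ω v w then 1 else 0) * (Φ 1 ω * Ψ 0 ω)
        + (if tadj ω w v then 1 else 0) * (Φ 0 ω * Ψ 1 ω) := fun ω => by
    rw [hv, hw]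
    rcases tadj_or_tadj (ω := ω) hvw with h | h <;> simp [h, tadj_asymm h]
  simp only [hvw']
  simp only [hv, hw, expect_add_distrib]
  rw [expect_ite_tadj_mul hvw (hΦ 1) _ _, expect_ite_tadj_mul hvw.symm (hΦ 0) _ _,
    expect_ite_tadj_mul hvw.symm (hΨ 1) _ _, expect_ite_tadj_mul hvw (hΨ 0) _ _,
    expect_ite_tadj_mul hvw (hΦΨ 1 0) _ _, expect_ite_tadj_mul hvw.symm (hΦΨ 0 1) _ _,
    expect_mul_of_edgeDependsOn (hΦ 1) (hΨ 0) (disjoint_starAway v w),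
    expect_mul_of_edgeDependsOn (hΦ 0) (hΨ 1) (disjoint_starAway v w)]
  -- the covariance is now `-(𝔼 Φ 0 - 𝔼 Φ 1) * (𝔼 Ψ 0 - 𝔼 Ψ 1) / 4`
  · have hΦ10 : 𝔼 ω, Φ 1 ω ≤ 𝔼 ω, Φ 0 ω :=
      expect_le_expect fun ω _ => lowDegInd_antitone (by omega)
    have hΨ10 : 𝔼 ω, Ψ 1 ω ≤ 𝔼 ω, Ψ 0 ω :=
      expect_le_expect fun ω _ => lowDegInd_antitone (by omega)
    nlinarith [mul_nonneg (sub_nonneg.2 hΦ10) (sub_nonneg.2 hΨ10)]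
  all_goals simp [starAway, hvw, hvw.symm]

end Covariance

section KingProbability

variable {n : ℕ} {v w : Fin n}

lemma ite_not_tKing_le_sum (ω : TOmega n) (v : Fin n) :
    (if tKing ω v then 0 else 1 : ℝ) ≤ ∑ w ∈ univ.erase v, ∏ x ∈ (univ.erase v).erase w,
      (1 - (if tadj ω v x then 1 else 0) * if tadj ω x w then 1 else 0) := by
  have hfactor : ∀ w x, 0 ≤ 1 - ((if tadj ω v x then 1 else 0) * if tadj ω x w then 1 else 0 : ℝ) :=
    fun w x => by split_ifs <;> norm_num
  split_ifs with hk
  · exact sum_nonneg fun w _ => prod_nonneg fun x _ => hfactor w x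
  · simp only [tKing, not_forall, not_or, not_exists] at hk
    obtain ⟨w, hwv, -, hw⟩ := hk
    refine le_trans (le_of_eq ?_) (single_le_sum (fun w _ => prod_nonneg fun x _ => hfactor w x)
      (mem_erase.2 ⟨hwv, mem_univ w⟩))
    refine (prod_eq_one fun x _ => ?_).symm
    have := hw x
    split_ifs <;> simp_all

lemma expect_prod_not_twoPath (hvw : v ≠ w) :
    𝔼 ω, ∏ x ∈ (univ.erase v).erase w,
      (1 - (if tadj ω v x then 1 else 0) * if tadj ω x w then (1 : ℝ) else 0)
      = (3 / 4) ^ (n - 2) := by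
  have hdep : ∀ x ∈ (univ.erase v).erase w, EdgeDependsOn
      (fun ω => 1 - (if tadj ω v x then 1 else 0) * if tadj ω x w then (1 : ℝ) else 0)
      ({(v, x), (x, v)} ∪ {(x, w), (w, x)}) := fun x _ a b h => by
    simp only [(edgeDependsOn_ite_tadj v x).mul (edgeDependsOn_ite_tadj x w) h]
  rw [expect_prod_of_edgeDependsOn _ hdep]
  · rw [prod_congr rfl fun x hx => ?_, prod_const,
      card_erase_of_mem (mem_erase.2 ⟨hvw.symm, mem_univ w⟩), card_erase_of_mem (mem_univ v),
      card_univ, Fintype.card_fin, Nat.sub_sub]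
    obtain ⟨hxw, hxv⟩ : x ≠ w ∧ x ≠ v := by simpa using hx
    rw [expect_sub_distrib, Fintype.expect_const,
      expect_ite_tadj_mul hxv.symm (edgeDependsOn_ite_tadj x w), expect_ite_tadj hxw]
    · norm_num
    all_goals simp [hvw, hxw, hxv.symm]
  · intro x hx y hy hxy
    simp only [coe_erase, coe_univ, Set.mem_sdiff, Set.mem_univ, Set.mem_singleton_iff,
      true_and] at hx hy
    refine Set.disjoint_left.2 fun p hp hq => ?_
    simp only [Set.union_insert, Set.union_singleton, Set.mem_insert_iff,
      Set.mem_singleton_iff] at hp hq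
    aesop

lemma expect_ite_not_tKing_le (v : Fin n) :
    𝔼 ω, (if tKing ω v then 0 else 1 : ℝ) ≤ n * (3 / 4) ^ (n - 2) := by
  calc 𝔼 ω, (if tKing ω v then 0 else 1 : ℝ)
      ≤ ∑ w ∈ univ.erase v, 𝔼 ω, ∏ x ∈ (univ.erase v).erase w,
          (1 - (if tadj ω v x then 1 else 0) * if tadj ω x w then 1 else 0) := by
        rw [← expect_sum_comm]
        exact expect_le_expect fun ω _ => ite_not_tKing_le_sum ω v
    _ = (n - 1 : ℕ) * (3 / 4 : ℝ) ^ (n - 2) := by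
        rw [sum_congr rfl fun w hw => expect_prod_not_twoPath (ne_of_mem_erase hw).symm, sum_const,
          card_erase_of_mem (mem_univ v), card_univ, Fintype.card_fin, nsmul_eq_mul]
    _ ≤ n * (3 / 4) ^ (n - 2) := by gcongr; exact_mod_cast Nat.sub_le n 1

end KingProbability

section Variance

lemma tS_eq_sum {n : ℕ} (ω : TOmega n) : (tS ω : ℝ) = ∑ v, if tSeymour ω v then 1 else 0 := by
  rw [tS, Set.ncard_eq_toFinset_card', Set.toFinset_ofPred, card_filter, Nat.cast_sum]
  exact sum_congr rfl fun v _ => by split_ifs <;> simp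

lemma tVarS_le (n : ℕ) : tVarS n ≤ 2 * n + 2 * n * (n * (n * (3 / 4) ^ (n - 2))) := by
  set X : TOmega n → ℝ := fun ω => ∑ v, lowDegInd n (tN1 ω v).ncard
  set S : TOmega n → ℝ := fun ω => ∑ v, if tSeymour ω v then 1 else 0
  set B : TOmega n → ℝ := fun ω => ∑ v, if tKing ω v then 0 else 1
  have hXS : ∀ ω, 0 ≤ X ω - S ω ∧ X ω - S ω ≤ B ω := fun ω => by
    have h₁ := sum_le_sum fun v (_ : v ∈ univ) => ite_tSeymour_le_lowDegInd ω v
    have h₂ := sum_le_sum fun v (_ : v ∈ univ) => lowDegInd_le_ite_tSeymour_add ω v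
    rw [sum_add_distrib] at h₂
    constructor <;> linarith
  have hB : ∀ ω, B ω ≤ n := fun ω => by
    calc B ω ≤ ∑ _v : Fin n, (1 : ℝ) := sum_le_sum fun v _ => by split_ifs <;> norm_num
      _ = n := by simp
  have hEB : 𝔼 ω, B ω ≤ n * (n * (3 / 4) ^ (n - 2)) := by
    calc 𝔼 ω, B ω = ∑ v, 𝔼 ω, (if tKing ω v then 0 else 1 : ℝ) := expect_sum_comm _ _ _
      _ ≤ ∑ _v : Fin n, (n * (3 / 4) ^ (n - 2) : ℝ) :=
          sum_le_sum fun v _ => expect_ite_not_tKing_le v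
      _ = n * (n * (3 / 4) ^ (n - 2)) := by simp
  have hVarX : 𝔼 ω, (X ω - 𝔼 ω, X ω) ^ 2 ≤ n := by
    simpa using expect_sq_sub_expect_sum_le_card (fun v ω => lowDegInd n (tN1 ω v).ncard)
      (fun v ω => abs_lowDegInd_le_one _) fun v w hvw => expect_lowDegInd_mul_le hvw
  have hVarD : 𝔼 ω, (X ω - S ω - 𝔼 ω, (X ω - S ω)) ^ 2 ≤ n * (n * (n * (3 / 4) ^ (n - 2))) := by
    refine (expect_sq_sub_expect_le_expect_sq _).trans ?_
    calc 𝔼 ω, (X ω - S ω) ^ 2 ≤ 𝔼 ω, n * B ω := expect_le_expect fun ω _ => by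
          nlinarith [hXS ω, hB ω]
      _ ≤ n * (n * (n * (3 / 4) ^ (n - 2))) := by
          rw [← mul_expect]
          gcongr
  have key := expect_sq_sub_expect_sub_le X (fun ω => X ω - S ω)
  simp only [sub_sub_cancel] at key
  rw [tVarS, tES, tEx_eq_expect, tEx_eq_expect]
  simp only [tS_eq_sum]
  linarith

lemma exists_sq_mul_pow_le : ∃ C : ℝ, ∀ m : ℕ, (m : ℝ) ^ 2 * (3 / 4) ^ (m - 2) ≤ C := by
  obtain ⟨C, hC⟩ := (tendsto_pow_const_mul_const_pow_of_lt_one 2 (r := 3 / 4) (by norm_num)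
    (by norm_num)).bddAbove_range
  refine ⟨16 / 9 * C, fun m => ?_⟩
  have hm : (m : ℝ) ^ 2 * (3 / 4) ^ m ≤ C := hC ⟨m, rfl⟩
  have hpow : (3 / 4 : ℝ) ^ (m - 2) * (3 / 4) ^ 2 ≤ (3 / 4) ^ m := by
    rw [← pow_add]
    exact pow_le_pow_of_le_one (by norm_num) (by norm_num) (by omega)
  nlinarith [sq_nonneg (m : ℝ), pow_nonneg (show (0 : ℝ) ≤ 3 / 4 by norm_num) (m - 2)]

lemma exists_tVarS_le : ∃ C : ℝ, 0 < C ∧ ∀ n : ℕ, tVarS n ≤ C * n := by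
  obtain ⟨C, hC⟩ := exists_sq_mul_pow_le
  have hC0 : 0 ≤ C := by simpa using hC 0
  refine ⟨2 + 2 * C, by positivity, fun n => (tVarS_le n).trans ?_⟩
  have := hC n
  have hn : (0 : ℝ) ≤ n := n.cast_nonneg
  nlinarith

lemma tPr_le_tVarS_div {n : ℕ} {t : ℝ} (ht : 0 < t) :
    tPr {ω : TOmega n | t ≤ |(tS ω : ℝ) - tES n|} ≤ tVarS n / t ^ 2 := by
  rw [tPr_eq_expect, tVarS, tEx_eq_expect]
  exact expect_indicator_le_expect_sq_div _ ht

lemma tPr_nonneg {n : ℕ} (E : Set (TOmega n)) : 0 ≤ tPr E := by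
  rw [tPr_eq_expect]
  exact expect_nonneg fun ω _ => Set.indicator_nonneg (fun _ _ => zero_le_one) ω

end Variance

/-- Chebychev-type concentration for the number of Seymour vertices of the random
tournament on `n` vertices:  there is a constant `K > 0` such that for every `A > 0` and
every `n ≥ 2`,
`P(|S_n − E(S_n)| ≥ A·√(n log n)) ≤ K / (A² log n)`;
in particular, for each fixed `A > 0` this probability tends to `0` as `n → ∞`. -/
theorem seymour_concentration :
    (∃ K : ℝ, 0 < K ∧ ∀ A : ℝ, 0 < A → ∀ n : ℕ, 2 ≤ n →
        tPr {ω : TOmega n | A * Real.sqrt ((n : ℝ) * Real.log n) ≤ |(tS ω : ℝ) - tES n|}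
          ≤ K / (A ^ 2 * Real.log n)) ∧
      ∀ A : ℝ, 0 < A →
        Filter.Tendsto
          (fun n : ℕ =>
            tPr {ω : TOmega n | A * Real.sqrt ((n : ℝ) * Real.log n) ≤ |(tS ω : ℝ) - tES n|})
          Filter.atTop (nhds 0) := by
  obtain ⟨C, hC, hvar⟩ := exists_tVarS_le
  have hbound : ∀ A : ℝ, 0 < A → ∀ n : ℕ, 2 ≤ n →
      tPr {ω : TOmega n | A * Real.sqrt ((n : ℝ) * Real.log n) ≤ |(tS ω : ℝ) - tES n|}
        ≤ C / (A ^ 2 * Real.log n) := fun A hA n hn => by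
    have hlog : 0 < Real.log n := Real.log_pos (by exact_mod_cast hn)
    have hnlog : 0 < (n : ℝ) * Real.log n := by positivity
    calc _ ≤ tVarS n / (A * Real.sqrt ((n : ℝ) * Real.log n)) ^ 2 :=
          tPr_le_tVarS_div (by positivity)
      _ ≤ C * n / (A ^ 2 * ((n : ℝ) * Real.log n)) := by
          rw [mul_pow, Real.sq_sqrt hnlog.le]
          gcongr
          exact hvar n
      _ = C / (A ^ 2 * Real.log n) := by field_simp
  refine ⟨⟨C, hC, hbound⟩, fun A hA => ?_⟩
  have hlim : Filter.Tendsto (fun n : ℕ => C / (A ^ 2 * Real.log n)) Filter.atTop (nhds 0) :=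
    tendsto_const_nhds.div_atTop <|
      (Real.tendsto_log_atTop.comp tendsto_natCast_atTop_atTop).const_mul_atTop (by positivity)
  exact squeeze_zero' (Filter.Eventually.of_forall fun n => tPr_nonneg _)
    (Filter.eventually_atTop.2 ⟨2, hbound A hA⟩) hlim
end

section
/- Let 0 < p < 1/2 and let Bin(n,p) be a binomial random variable with n trials and success probability p. Then P(Bin(n,p) > (n−1)/2) ≤ (2p·e^{1−2p})^{n/2}. -/
/-! Since `p ≤ 1 - p`, every term of the tail, where `k ≥ n/2`, satisfies
`p^k (1-p)^(n-k) ≤ (p(1-p))^(n/2)`; summing the binomial coefficients bounds the tail by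
`2^n (p(1-p))^(n/2) = (4p(1-p))^(n/2)`, and `2(1-p) = 1 + (1-2p) ≤ e^(1-2p)`. -/

open Real

theorem pow_mul_pow_sub_sq_le {p q : ℝ} (hp : 0 ≤ p) (hpq : p ≤ q) {n k : ℕ}
    (hnk : n ≤ 2 * k) (hkn : k ≤ n) : (p ^ k * q ^ (n - k)) ^ 2 ≤ (p * q) ^ n := by
  obtain ⟨m, hm⟩ := Nat.exists_eq_add_of_le hnk
  have hq : 0 ≤ q := hp.trans hpq
  calc (p ^ k * q ^ (n - k)) ^ 2 = p ^ n * q ^ (2 * (n - k)) * p ^ m := by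
        rw [mul_pow, ← pow_mul, ← pow_mul, mul_comm k, hm, pow_add]; ring
    _ ≤ p ^ n * q ^ (2 * (n - k)) * q ^ m := by gcongr
    _ = (p * q) ^ n := by rw [mul_assoc, ← pow_add, mul_pow]; congr 2; omega

theorem pow_mul_pow_sub_le_rpow_half {p q : ℝ} (hp : 0 ≤ p) (hpq : p ≤ q) {n k : ℕ}
    (hnk : n ≤ 2 * k) (hkn : k ≤ n) : p ^ k * q ^ (n - k) ≤ (p * q) ^ ((n : ℝ) / 2) := by
  have hq : 0 ≤ q := hp.trans hpq
  have hsq : ((p * q) ^ ((n : ℝ) / 2)) ^ 2 = (p * q) ^ n := by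
    rw [← rpow_natCast _ 2, ← rpow_mul (by positivity)]; norm_num
  refine (pow_le_pow_iff_left₀ (by positivity) (by positivity) two_ne_zero).1 ?_
  rw [hsq]; exact pow_mul_pow_sub_sq_le hp hpq hnk hkn

theorem two_pow_mul_rpow_half {x : ℝ} (hx : 0 ≤ x) (n : ℕ) :
    2 ^ n * x ^ ((n : ℝ) / 2) = (4 * x) ^ ((n : ℝ) / 2) := by
  rw [mul_rpow (by norm_num) hx, show (4 : ℝ) = 2 ^ (2 : ℝ) by norm_num, ← rpow_mul (by norm_num),
    mul_div_cancel₀ _ two_ne_zero, rpow_natCast]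

theorem sum_choose_mul_pow_upper_half_le {p q : ℝ} (hp : 0 ≤ p) (hpq : p ≤ q) (n : ℕ) :
    (∑ k ∈ Finset.range (n + 1),
        if ((n : ℝ) - 1) / 2 < (k : ℝ) then (n.choose k : ℝ) * p ^ k * q ^ (n - k) else 0) ≤
      (4 * (p * q)) ^ ((n : ℝ) / 2) := by
  have hq : 0 ≤ q := hp.trans hpq
  calc _ ≤ ∑ k ∈ Finset.range (n + 1), (n.choose k : ℝ) * (p * q) ^ ((n : ℝ) / 2) := by
        refine Finset.sum_le_sum fun k hk => ?_
        split_ifs with h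
        · have hnk : n < 2 * k + 1 := by exact_mod_cast (show (n : ℝ) < 2 * k + 1 by linarith)
          have hkn : k ≤ n := Nat.lt_succ_iff.1 (Finset.mem_range.1 hk)
          rw [mul_assoc]
          gcongr
          exact pow_mul_pow_sub_le_rpow_half hp hpq (by omega) hkn
        · positivity
    _ = (4 * (p * q)) ^ ((n : ℝ) / 2) := by
        rw [← Finset.sum_mul, ← Nat.cast_sum, Nat.sum_range_choose, Nat.cast_pow, Nat.cast_two,
          two_pow_mul_rpow_half (by positivity)]

/-- Chernoff-type bound for the binomial distribution:  if `0 < p < 1/2` and `Bin(n, p)` is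
a binomial random variable with `n` trials and success probability `p`, then
`P(Bin(n, p) > (n − 1)/2) ≤ (2p·e^{1−2p})^{n/2}`. -/
theorem binomial_upper_tail_bound (n : ℕ) (p : ℝ) (hp0 : 0 < p) (hp : p < 1 / 2) :
    (∑ k ∈ Finset.range (n + 1),
        if ((n : ℝ) - 1) / 2 < (k : ℝ) then
          (n.choose k : ℝ) * p ^ k * (1 - p) ^ (n - k)
        else 0) ≤
      (2 * p * Real.exp (1 - 2 * p)) ^ ((n : ℝ) / 2) := by
  have hbase : 4 * (p * (1 - p)) ≤ 2 * p * exp (1 - 2 * p) := by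
    rw [show 4 * (p * (1 - p)) = 2 * p * (2 * (1 - p)) by ring]
    gcongr
    linarith [add_one_le_exp (1 - 2 * p)]
  calc _ ≤ (4 * (p * (1 - p))) ^ ((n : ℝ) / 2) :=
        sum_choose_mul_pow_upper_half_le hp0.le (by linarith) n
    _ ≤ _ := rpow_le_rpow (by nlinarith) hbase (by positivity)
end

section
/- Let S_n be the number of Seymour vertices of the random digraph D(n,p) with n ≥ 2 and 0 < p < 1/2. Then E(S_n) ≥ n·P(Bin(n−1,p) ≤ (n−1)/2) − n(n−1)·(1−p)·(1−p²)^{n−2}, where Bin(n−1,p) denotes a binomial random variable with n−1 trials and success probability p. -/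
/-! Model of the random digraph `D(n, p)` on vertex set `Fin n`:  a sample point assigns a
Boolean to every ordered pair of vertices, and the arc `u → v` (for `u ≠ v`) is present iff
the Boolean at `(u, v)` is `true`.  The probability of a sample point is the product, over
ordered pairs of distinct vertices, of `p` for each present arc and `1 − p` for each absent
arc (the unused diagonal coordinates are forced to be `false`), so that the arcs are
independent and each is present with probability `p`. -/

/-- The sample space of the random digraph on `n` vertices. -/
abbrev DOmega (n : ℕ) := Fin n → Fin n → Bool

/-- `dadj ω u v` : the arc `u → v` is present in the digraph coded by `ω`. -/
def dadj {n : ℕ} (ω : DOmega n) (u v : Fin n) : Prop :=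
  u ≠ v ∧ ω u v = true

/-- The probability weight of the sample point `ω` in the model `D(n, p)`. -/
noncomputable def dwt {n : ℕ} (p : ℝ) (ω : DOmega n) : ℝ :=
  ∏ u : Fin n, ∏ v : Fin n,
    if u = v then (if ω u v then 0 else 1) else (if ω u v then p else 1 - p)

/-- Probability of an event in the random digraph model `D(n, p)`. -/
noncomputable def dPr {n : ℕ} (p : ℝ) (E : Set (DOmega n)) : ℝ :=
  ∑ ω : DOmega n, E.indicator (dwt p) ω

/-- Expectation of a random variable in the random digraph model `D(n, p)`. -/
noncomputable def dEx {n : ℕ} (p : ℝ) (f : DOmega n → ℝ) : ℝ :=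
  ∑ ω : DOmega n, dwt p ω * f ω

/-- The first out-neighborhood of `v`: vertices at directed distance exactly 1. -/
def dN1 {n : ℕ} (ω : DOmega n) (v : Fin n) : Set (Fin n) := {w | dadj ω v w}

/-- The second out-neighborhood of `v`: vertices at directed distance exactly 2. -/
def dN2 {n : ℕ} (ω : DOmega n) (v : Fin n) : Set (Fin n) :=
  {w | w ≠ v ∧ ¬ dadj ω v w ∧ ∃ x, dadj ω v x ∧ dadj ω x w}

/-- `v` is a Seymour vertex of the digraph coded by `ω`. -/
def dSeymour {n : ℕ} (ω : DOmega n) (v : Fin n) : Prop :=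
  (dN1 ω v).ncard ≤ (dN2 ω v).ncard

/-- The number of Seymour vertices. -/
noncomputable def dS {n : ℕ} (ω : DOmega n) : ℕ := {v | dSeymour ω v}.ncard

/-- The expected number of Seymour vertices of `D(n, p)`. -/
noncomputable def dES (n : ℕ) (p : ℝ) : ℝ := dEx p (fun ω : DOmega n => (dS ω : ℝ))

/-! By linearity `E(S_n) = ∑_v P(v is Seymour)`. If `v` has out-degree at most `(n-1)/2` and
every other vertex lies in `N₁(v) ∪ N₂(v)`, then `|N₁(v)| + |N₂(v)| ≥ n - 1` forces
`|N₂(v)| ≥ |N₁(v)|`; hence, pointwise,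
`1[v Seymour] ≥ 1[deg⁺ v ≤ (n-1)/2] - #{w ≠ v : w ∉ N₁(v) ∪ N₂(v)}`.
The out-degree of `v` is `Bin(n-1, p)`. A vertex `w ≠ v` is missed iff the arc `v → w` is absent
and, for each of the other `n - 2` vertices `x`, the path `v → x → w` is absent; these events
involve disjoint sets of arcs, so `w` is missed with probability `(1-p)(1-p²)^(n-2)`. -/

open Finset

section ProductWeights

variable {ι β : Type*} [Fintype ι] [DecidableEq ι] [Fintype β]

theorem sum_prod_mul_prod (μ F : ι → β → ℝ) :
    ∑ f : ι → β, (∏ i, μ i (f i)) * ∏ i, F i (f i) = ∏ i, ∑ b, μ i b * F i b := by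
  simp_rw [← prod_mul_distrib]
  exact (Fintype.prod_sum fun i b => μ i b * F i b).symm

theorem sum_prod_mul_prod_subtype_ne (μ : ι → β → ℝ) (a : ι) (G : β → ℝ)
    (H : ι → β → β → ℝ) :
    ∑ f : ι → β, (∏ i, μ i (f i)) * (G (f a) * ∏ i : {i // i ≠ a}, H i (f a) (f i)) =
      ∑ b, μ a b * G b * ∏ i : {i // i ≠ a}, ∑ c, μ i c * H i b c := by
  rw [← (Equiv.funSplitAt a β).symm.sum_comp, Fintype.sum_prod_type]
  refine sum_congr rfl fun b _ => ?_
  simp only [Fintype.prod_eq_mul_prod_subtype_ne _ a, Equiv.funSplitAt_symm_apply, dite_true]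
  rw [← sum_prod_mul_prod (fun i : {i // i ≠ a} => μ i) (fun i => H i b), mul_sum]
  refine sum_congr rfl fun η _ => ?_
  have hη (i : {i // i ≠ a}) : (if h : (i : ι) = a then b else η ⟨i, h⟩) = η i := dif_neg i.2
  simp only [hη]
  ring

theorem sum_prod_bernoulli_mul (t : Finset ι) (q : ℝ) (f : ℕ → ℝ) :
    ∑ η : ι → Bool,
        (∏ a, if a ∈ t then (if η a then q else 1 - q) else (if η a then 0 else 1)) *
          f #{a ∈ t | η a} =
      ∑ k ∈ range (#t + 1), ((#t).choose k : ℝ) * q ^ k * (1 - q) ^ (#t - k) * f k := by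
  let e : Finset ι ≃ (ι → Bool) :=
    { toFun s a := decide (a ∈ s)
      invFun η := {a | η a}
      left_inv s := by ext; simp
      right_inv η := by funext a; simp }
  have hterm (s : Finset ι) :
      (∏ a, if a ∈ t then (if e s a then q else 1 - q) else (if e s a then 0 else 1)) *
        f #{a ∈ t | e s a} =
      if s ∈ t.powerset then q ^ #s * (1 - q) ^ (#t - #s) * f #s else 0 := by
    simp only [e, Equiv.coe_fn_mk, decide_eq_true_eq, mem_powerset]
    split_ifs with hst
    · have hprod : (∏ a, if a ∈ t then (if a ∈ s then q else 1 - q) else (if a ∈ s then 0 else 1))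
          = ∏ a ∈ t, if a ∈ s then q else 1 - q := by
        rw [← Fintype.prod_ite_mem t fun a => if a ∈ s then q else 1 - q]
        refine prod_congr rfl fun a _ => ?_
        by_cases hat : a ∈ t
        · simp only [hat, if_true]
        · simp [hat, show a ∉ s from fun has => hat (hst has)]
      rw [hprod, prod_ite, prod_const, prod_const, filter_mem_eq_inter, inter_eq_right.2 hst,
        filter_not, filter_mem_eq_inter, inter_eq_right.2 hst, card_sdiff_of_subset hst]
    · obtain ⟨a, has, hat⟩ := not_subset.1 hst
      rw [prod_eq_zero (mem_univ a) (by simp [has, hat]), zero_mul]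
  rw [← e.sum_comp, sum_congr rfl fun s _ => hterm s, sum_ite_mem, univ_inter,
    sum_powerset_apply_card (fun k => q ^ k * (1 - q) ^ (#t - k) * f k)]
  simp only [nsmul_eq_mul, mul_assoc]

theorem prod_ite_ite_eq_mul_pow {v w : ι} (hvw : v ≠ w) (a b : ℝ) :
    ∏ y, (if y = v then 1 else if y = w then a else b) = a * b ^ (Fintype.card ι - 2) := by
  have hw : w ∈ univ.erase v := mem_erase.2 ⟨hvw.symm, mem_univ w⟩
  rw [← mul_prod_erase univ _ (mem_univ v), ← mul_prod_erase _ _ hw,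
    prod_congr rfl fun y hy => by rw [if_neg (mem_erase.1 (mem_erase.1 hy).2).1,
      if_neg (mem_erase.1 hy).1], prod_const, card_erase_of_mem hw,
    card_erase_of_mem (mem_univ v), card_univ, if_pos rfl, if_neg hvw.symm, if_pos rfl, one_mul,
    Nat.sub_sub]

end ProductWeights

section RandomDigraph

variable {n : ℕ} {p : ℝ}

def arcWt (p : ℝ) (u w : Fin n) (b : Bool) : ℝ :=
  if u = w then (if b then 0 else 1) else (if b then p else 1 - p)

def rowWt (p : ℝ) (u : Fin n) (r : Fin n → Bool) : ℝ := ∏ w, arcWt p u w (r w)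

theorem dwt_eq_prod_rowWt (p : ℝ) (ω : DOmega n) : dwt p ω = ∏ u, rowWt p u (ω u) := rfl

theorem dwt_nonneg (h0 : 0 ≤ p) (h1 : p ≤ 1) (ω : DOmega n) : 0 ≤ dwt p ω :=
  prod_nonneg fun _ _ => prod_nonneg fun _ _ => by split_ifs <;> linarith

theorem sum_arcWt (p : ℝ) (u w : Fin n) : ∑ b, arcWt p u w b = 1 := by
  by_cases h : u = w <;> simp [arcWt, h]

theorem sum_rowWt (p : ℝ) (u : Fin n) : ∑ r, rowWt p u r = 1 := by
  simpa only [rowWt, prod_const_one, mul_one, sum_arcWt] using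
    sum_prod_mul_prod (arcWt p u) fun _ _ => (1 : ℝ)

theorem sum_rowWt_mul_ite_not {x w : Fin n} (hxw : x ≠ w) :
    ∑ r, rowWt p x r * (if r w then 0 else 1) = 1 - p := by
  have hsingle (r : Fin n → Bool) : (if r w then (0 : ℝ) else 1) =
      ∏ y, if y = w then (if r y then 0 else 1) else 1 :=
    (Fintype.prod_ite_eq' w fun y => if r y then (0 : ℝ) else 1).symm
  simp only [hsingle, rowWt]
  rw [sum_prod_mul_prod (arcWt p x) fun y b => if y = w then (if b then 0 else 1) else 1,
    Fintype.prod_eq_single w fun y hy => by simpa [hy] using sum_arcWt p x y]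
  simp [arcWt, hxw]

theorem dEx_mono (h0 : 0 ≤ p) (h1 : p ≤ 1) {f g : DOmega n → ℝ} (hfg : ∀ ω, f ω ≤ g ω) :
    dEx p f ≤ dEx p g :=
  sum_le_sum fun ω _ => mul_le_mul_of_nonneg_left (hfg ω) (dwt_nonneg h0 h1 ω)

theorem dEx_sub (p : ℝ) (f g : DOmega n → ℝ) :
    dEx p (fun ω => f ω - g ω) = dEx p f - dEx p g := by
  simp only [dEx, mul_sub, sum_sub_distrib]

theorem dEx_sum {ι : Type*} (p : ℝ) (s : Finset ι) (f : ι → DOmega n → ℝ) :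
    dEx p (fun ω => ∑ i ∈ s, f i ω) = ∑ i ∈ s, dEx p (f i) := by
  simp only [dEx, mul_sum]
  exact sum_comm

theorem dEx_indicator_one (p : ℝ) (E : Set (DOmega n)) : dEx p (E.indicator 1) = dPr p E := by
  classical
  simp [dEx, dPr, Set.indicator_apply]

theorem dEx_comp_row (p : ℝ) (v : Fin n) (F : (Fin n → Bool) → ℝ) :
    dEx p (fun ω => F (ω v)) = ∑ r, rowWt p v r * F r := by
  have := sum_prod_mul_prod_subtype_ne (rowWt p) v F fun _ _ _ => 1
  simpa [sum_rowWt, dEx, dwt_eq_prod_rowWt] using this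

def smallOutdeg (v : Fin n) : Set (DOmega n) := {ω | ((dN1 ω v).ncard : ℝ) ≤ ((n : ℝ) - 1) / 2}

def unreached (v w : Fin n) : Set (DOmega n) := {ω | w ∉ dN1 ω v ∧ w ∉ dN2 ω v}

theorem ncard_dN1 (ω : DOmega n) (v : Fin n) : (dN1 ω v).ncard = #{w ∈ univ.erase v | ω v w} := by
  rw [← Set.ncard_coe_finset]
  congr 1
  ext w
  simp [dN1, dadj, ne_comm]

theorem dSeymour_of_smallOutdeg {ω : DOmega n} {v : Fin n} (hA : ω ∈ smallOutdeg v)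
    (hreach : ∀ w ≠ v, w ∈ dN1 ω v ∪ dN2 ω v) : dSeymour ω v := by
  have hsub : ((univ.erase v : Finset (Fin n)) : Set (Fin n)) ⊆ dN1 ω v ∪ dN2 ω v :=
    fun w hw => hreach w (mem_erase.1 hw).1
  have hcover := (Set.ncard_le_ncard hsub).trans (Set.ncard_union_le _ _)
  rw [Set.ncard_coe_finset, card_erase_of_mem (mem_univ v), card_univ, Fintype.card_fin] at hcover
  have hcover' : (n : ℝ) ≤ (dN1 ω v).ncard + (dN2 ω v).ncard + 1 := by
    exact_mod_cast (show n ≤ (dN1 ω v).ncard + (dN2 ω v).ncard + 1 by omega)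
  have hA' : ((dN1 ω v).ncard : ℝ) ≤ ((n : ℝ) - 1) / 2 := hA
  unfold dSeymour
  exact_mod_cast (show ((dN1 ω v).ncard : ℝ) ≤ (dN2 ω v).ncard by linarith)

theorem indicator_smallOutdeg_sub_sum_le (ω : DOmega n) (v : Fin n) :
    (smallOutdeg v).indicator 1 ω - ∑ w ∈ univ.erase v, (unreached v w).indicator 1 ω ≤
      {ω | dSeymour ω v}.indicator (1 : DOmega n → ℝ) ω := by
  have hnonneg (s : Set (DOmega n)) : (0 : ℝ) ≤ s.indicator 1 ω :=
    Set.indicator_nonneg (fun _ _ => zero_le_one) ω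
  by_cases hmiss : ∃ w ∈ univ.erase v, ω ∈ unreached v w
  · obtain ⟨w, hw, hωw⟩ := hmiss
    have h1 : (1 : ℝ) ≤ ∑ w ∈ univ.erase v, (unreached v w).indicator 1 ω :=
      (Set.indicator_of_mem hωw (1 : DOmega n → ℝ)).symm.le.trans
        (single_le_sum (fun w _ => hnonneg (unreached v w)) hw)
    have h2 : (smallOutdeg v).indicator (1 : DOmega n → ℝ) ω ≤ 1 :=
      Set.indicator_le_self' (fun _ _ => zero_le_one) ω
    linarith [hnonneg {ω | dSeymour ω v}]
  · push Not at hmiss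
    rw [sum_eq_zero fun w hw => Set.indicator_of_notMem (hmiss w hw) _, sub_zero]
    by_cases hA : ω ∈ smallOutdeg v
    · have hreach (w) (hw : w ≠ v) : w ∈ dN1 ω v ∪ dN2 ω v := by
        by_contra h
        exact hmiss w (mem_erase.2 ⟨hw, mem_univ w⟩) (by simpa [unreached, not_or] using h)
      rw [Set.indicator_of_mem hA,
        Set.indicator_of_mem (show ω ∈ {ω | dSeymour ω v} from dSeymour_of_smallOutdeg hA hreach)]
    · rw [Set.indicator_of_notMem hA]
      exact hnonneg _

theorem dS_eq_sum_indicator (ω : DOmega n) :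
    (dS ω : ℝ) = ∑ v, {ω | dSeymour ω v}.indicator (1 : DOmega n → ℝ) ω := by
  classical
  simp [dS, Set.indicator_apply, Set.ncard_eq_toFinset_card']

theorem dPr_smallOutdeg (p : ℝ) (v : Fin n) :
    dPr p (smallOutdeg v) = ∑ k ∈ range n, if (k : ℝ) ≤ ((n : ℝ) - 1) / 2 then
      ((n - 1).choose k : ℝ) * p ^ k * (1 - p) ^ (n - 1 - k) else 0 := by
  have hind : (smallOutdeg v).indicator (1 : DOmega n → ℝ) = fun ω =>
      if ((#{w ∈ univ.erase v | ω v w} : ℕ) : ℝ) ≤ ((n : ℝ) - 1) / 2 then 1 else 0 := by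
    funext ω
    simp [Set.indicator_apply, smallOutdeg, ncard_dN1]
  have hrow (r : Fin n → Bool) : rowWt p v r =
      ∏ w, if w ∈ univ.erase v then (if r w then p else 1 - p) else (if r w then 0 else 1) := by
    refine prod_congr rfl fun w _ => ?_
    by_cases h : v = w
    · simp [arcWt, h]
    · simp [arcWt, h, Ne.symm h]
  rw [← dEx_indicator_one, hind, dEx_comp_row p v fun r =>
    if ((#{w ∈ univ.erase v | r w} : ℕ) : ℝ) ≤ ((n : ℝ) - 1) / 2 then 1 else 0]
  simp only [hrow]
  rw [sum_prod_bernoulli_mul (univ.erase v) p fun k => if (k : ℝ) ≤ ((n : ℝ) - 1) / 2 then 1 else 0,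
    card_erase_of_mem (mem_univ v), card_univ, Fintype.card_fin, Nat.sub_add_cancel (Fin.pos v)]
  simp only [mul_ite, mul_one, mul_zero]

theorem indicator_unreached_eq {v w : Fin n} (hvw : v ≠ w) (ω : DOmega n) :
    (unreached v w).indicator (1 : DOmega n → ℝ) ω = (if ω v w then 0 else 1) *
      ∏ x : {x // x ≠ v}, (if ω v x ∧ (x : Fin n) ≠ w then (if ω x w then 0 else 1) else 1) := by
  by_cases h : ω ∈ unreached v w
  · rw [Set.indicator_of_mem h, Pi.one_apply]
    obtain ⟨h1, h2⟩ := h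
    have hvw' : ω v w = false := by simpa [dN1, dadj, hvw] using h1
    rw [hvw', if_neg Bool.false_ne_true, one_mul]
    refine (prod_eq_one fun x _ => ?_).symm
    split_ifs with hx hxw
    · have hmem : w ≠ v ∧ ¬dadj ω v w ∧ ∃ x, dadj ω v x ∧ dadj ω x w :=
        ⟨hvw.symm, fun hd => absurd hd.2 (by simp [hvw']), x, ⟨x.2.symm, hx.1⟩, ⟨hx.2, hxw⟩⟩
      exact (h2 hmem).elim
    · rfl
    · rfl
  · rw [Set.indicator_of_notMem h]
    cases hb : ω v w
    · obtain ⟨-, x, hvx, hx, hxw, hxw'⟩ : w ≠ v ∧ ∃ x, v ≠ x ∧ ω v x ∧ x ≠ w ∧ ω x w := by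
        simpa [unreached, dN1, dN2, dadj, hvw, hb] using h
      rw [prod_eq_zero (mem_univ ⟨x, hvx.symm⟩) (by simp [hx, hxw, hxw']), mul_zero]
    · simp

theorem sum_rowWt_mul_unreached {v w : Fin n} (hvw : v ≠ w) :
    ∑ r, rowWt p v r * ((if r w then 0 else 1) *
      ∏ x : {x // x ≠ v}, (if r x ∧ (x : Fin n) ≠ w then 1 - p else 1)) =
      (1 - p) * (1 - p ^ 2) ^ (n - 2) := by
  set F : Fin n → Bool → ℝ := fun y b =>
    (if y = w then (if b then 0 else 1) else 1) * (if y ≠ v ∧ b ∧ y ≠ w then 1 - p else 1)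
  have hprod (r : Fin n → Bool) : (if r w then 0 else 1) *
      ∏ x : {x // x ≠ v}, (if r x ∧ (x : Fin n) ≠ w then 1 - p else 1) = ∏ y, F y (r y) := by
    rw [prod_mul_distrib, Fintype.prod_ite_eq', Fintype.prod_eq_mul_prod_subtype_ne _ v]
    simp only [ne_eq, not_true_eq_false, false_and, if_false, one_mul]
    exact congrArg _ (prod_congr rfl fun x _ => by simp [x.2])
  have hfactor (y : Fin n) :
      ∑ b, arcWt p v y b * F y b = if y = v then 1 else if y = w then 1 - p else 1 - p ^ 2 := by
    by_cases hyv : y = v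
    · subst hyv; simp [F, arcWt, hvw]
    · by_cases hyw : y = w
      · subst hyw; simp [F, arcWt, hyv, Ne.symm hyv]
      · have hsq : p * (1 - p) + (1 - p) = 1 - p ^ 2 := by ring
        simpa [F, arcWt, hyv, hyw, Ne.symm hyv] using hsq
  simp only [hprod, rowWt]
  rw [sum_prod_mul_prod (arcWt p v) F, prod_congr rfl fun y _ => hfactor y,
    prod_ite_ite_eq_mul_pow hvw, Fintype.card_fin]

theorem dPr_unreached {v w : Fin n} (hvw : v ≠ w) :
    dPr p (unreached v w) = (1 - p) * (1 - p ^ 2) ^ (n - 2) := by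
  have hinner (x : {x // x ≠ v}) (r : Fin n → Bool) :
      ∑ s, rowWt p x s * (if r x ∧ (x : Fin n) ≠ w then (if s w then 0 else 1) else 1) =
        if r x ∧ (x : Fin n) ≠ w then 1 - p else 1 := by
    split_ifs with h
    · exact sum_rowWt_mul_ite_not h.2
    · simp [sum_rowWt]
  rw [← dEx_indicator_one, dEx]
  simp only [indicator_unreached_eq hvw, dwt_eq_prod_rowWt]
  rw [sum_prod_mul_prod_subtype_ne (rowWt p) v (fun r => if r w then 0 else 1)
    fun x r s => if r x ∧ (x : Fin n) ≠ w then (if s w then 0 else 1) else 1]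
  simp only [hinner, mul_assoc]
  exact sum_rowWt_mul_unreached hvw

theorem sum_dPr_sub_le_dES (h0 : 0 ≤ p) (h1 : p ≤ 1) :
    ∑ v : Fin n, (dPr p (smallOutdeg v) - ∑ w ∈ univ.erase v, dPr p (unreached v w)) ≤ dES n p :=
  calc _ = dEx p fun ω => ∑ v, ((smallOutdeg v).indicator 1 ω -
          ∑ w ∈ univ.erase v, (unreached v w).indicator (1 : DOmega n → ℝ) ω) := by
        simp only [dEx_sum, dEx_sub, dEx_indicator_one]
    _ ≤ dEx p fun ω => ∑ v, {ω | dSeymour ω v}.indicator 1 ω :=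
        dEx_mono h0 h1 fun ω => sum_le_sum fun v _ => indicator_smallOutdeg_sub_sum_le ω v
    _ = dES n p := by simp only [dES, dS_eq_sum_indicator]

end RandomDigraph

theorem digraph_expected_seymour_lower_general (n : ℕ) (p : ℝ)
    (hp0 : 0 < p) (hp : p < 1 / 2) :
    (n : ℝ) *
        (∑ k ∈ Finset.range n,
          if (k : ℝ) ≤ ((n : ℝ) - 1) / 2 then
            ((n - 1).choose k : ℝ) * p ^ k * (1 - p) ^ (n - 1 - k)
          else 0)
      - (n : ℝ) * ((n : ℝ) - 1) * (1 - p) * (1 - p ^ 2) ^ (n - 2) ≤ dES n p := by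
  set binom := ∑ k ∈ Finset.range n, if (k : ℝ) ≤ ((n : ℝ) - 1) / 2 then
    ((n - 1).choose k : ℝ) * p ^ k * (1 - p) ^ (n - 1 - k) else 0
  have hvertex (v : Fin n) :
      dPr p (smallOutdeg v) - ∑ w ∈ univ.erase v, dPr p (unreached v w) =
        binom - ((n : ℝ) - 1) * ((1 - p) * (1 - p ^ 2) ^ (n - 2)) := by
    rw [dPr_smallOutdeg, sum_congr rfl fun w hw => dPr_unreached (mem_erase.1 hw).1.symm, sum_const,
      card_erase_of_mem (mem_univ v), card_univ, Fintype.card_fin, nsmul_eq_mul,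
      Nat.cast_pred (Fin.pos v)]
  have hbound := sum_dPr_sub_le_dES (n := n) hp0.le (by linarith)
  rw [sum_congr rfl fun v _ => hvertex v, sum_const, card_univ, Fintype.card_fin,
    nsmul_eq_mul] at hbound
  linarith

/-- Lower bound on the expected number of Seymour vertices of the random digraph `D(n, p)`
with `n ≥ 2` and `0 < p < 1/2`:
`E(S_n) ≥ n · P(Bin(n−1, p) ≤ (n−1)/2) − n(n−1)·(1−p)·(1−p²)^(n−2)`. -/
theorem digraph_expected_seymour_lower (n : ℕ) (hn : 2 ≤ n) (p : ℝ)
    (hp0 : 0 < p) (hp : p < 1 / 2) :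
    (n : ℝ) *
        (∑ k ∈ Finset.range n,
          if (k : ℝ) ≤ ((n : ℝ) - 1) / 2 then
            ((n - 1).choose k : ℝ) * p ^ k * (1 - p) ^ (n - 1 - k)
          else 0)
      - (n : ℝ) * ((n : ℝ) - 1) * (1 - p) * (1 - p ^ 2) ^ (n - 2) ≤ dES n p :=
  digraph_expected_seymour_lower_general n p hp0 hp
end
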